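/- arXiv:2404.09142 — 5 statements merged into one kernel-verified Lean document; each statement's English description precedes it below -/
import Mathlib

section
/- Lemma (Cauchy transform ratio). Let μ be a probability measure on the real line with bounded support and let b = sup{t : t ∈ supp(μ)}. Then the map Φ : (b,∞) → ℝ given by Φ(x) = G_μ(x)²/G_μ'(x) is a continuous, nonincreasing function taking values in [−1, 0]. -/
/-!
Lemma (Cauchy transform ratio).  Let `μ` be a probability measure on the real line with
bounded support and let `b = sup supp(μ)`.  Then the map `Φ : (b,∞) → ℝ` given by
`Φ(x) = G_μ(x)² / G_μ'(x)` is a continuous, nonincreasing function taking values in `[-1, 0]`,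
where `G_μ(z) = ∫ (z - t)⁻¹ dμ(t)` is the Cauchy transform and
`G_μ'(z) = -∫ (z - t)⁻² dμ(t)` its derivative.

The bounded support and the identification of `b` as the supremum of the support are encoded
by: `μ (Set.Iio a) = 0`, `μ (Set.Ioi b) = 0` (so the support is contained in `[a, b]`), and
`μ (Set.Ioc (b - ε) b) > 0` for every `ε > 0` (so no smaller upper edge works).
-/

open MeasureTheory Set

open Metric

section Aux

variable {μ : Measure ℝ} {a b : ℝ}

lemma ctr_inv_le {u v : ℝ} (h0 : 0 < u) (huv : u ≤ v) (k : ℕ) :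
    (v ^ k)⁻¹ ≤ (u ^ k)⁻¹ :=
  inv_anti₀ (pow_pos h0 k) (pow_le_pow_left₀ h0.le huv k)

lemma ctr_ae_mem (hlow : μ (Set.Iio a) = 0) (hhigh : μ (Set.Ioi b) = 0) :
    ∀ᵐ t ∂μ, t ∈ Icc a b := by
  rw [ae_iff]
  refine measure_mono_null (fun t ht => ?_) (measure_union_null hlow hhigh)
  simp only [mem_Icc, not_and_or, not_le, mem_setOf_eq] at ht
  rcases ht with h | h
  · exact Or.inl h
  · exact Or.inr h

lemma ctr_meas (x : ℝ) (k : ℕ) : Measurable fun t : ℝ => ((x - t) ^ k)⁻¹ :=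
  ((measurable_const.sub measurable_id).pow_const k).inv

lemma ctr_integrable [IsProbabilityMeasure μ]
    (hlow : μ (Set.Iio a) = 0) (hhigh : μ (Set.Ioi b) = 0)
    {x : ℝ} (hx : b < x) (k : ℕ) :
    Integrable (fun t => ((x - t) ^ k)⁻¹) μ := by
  refine (integrable_const (((x - b) ^ k)⁻¹)).mono'
    ((ctr_meas x k).aestronglyMeasurable) ?_
  filter_upwards [ctr_ae_mem hlow hhigh] with t ht
  have h1 : (0:ℝ) < x - b := by linarith
  have h2 : x - b ≤ x - t := by linarith [ht.2]
  rw [Real.norm_eq_abs, abs_of_nonneg (inv_nonneg.mpr (pow_nonneg (by linarith) k))]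
  exact ctr_inv_le (by linarith) h2 k

lemma ctr_le_ab (hlow : μ (Set.Iio a) = 0) (hhigh : μ (Set.Ioi b) = 0)
    [IsProbabilityMeasure μ] : a ≤ b := by
  by_contra h
  push_neg at h
  have : μ Set.univ = 0 := by
    refine measure_mono_null (fun t _ => ?_) (measure_union_null hlow hhigh)
    rcases lt_or_ge t a with ht | ht
    · exact Or.inl ht
    · exact Or.inr (lt_of_lt_of_le h ht)
  simp [measure_univ] at this

lemma ctr_pos [IsProbabilityMeasure μ]
    (hlow : μ (Set.Iio a) = 0) (hhigh : μ (Set.Ioi b) = 0)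
    {x : ℝ} (hx : b < x) (k : ℕ) :
    0 < ∫ t, ((x - t) ^ k)⁻¹ ∂μ := by
  have hab := ctr_le_ab hlow hhigh
  have hxa : (0:ℝ) < x - a := by linarith
  have hle : ((x - a) ^ k)⁻¹ ≤ ∫ t, ((x - t) ^ k)⁻¹ ∂μ := by
    have : ∫ _t : ℝ, ((x - a) ^ k)⁻¹ ∂μ = ((x - a) ^ k)⁻¹ := by simp
    rw [← this]
    refine integral_mono_ae (integrable_const _) (ctr_integrable hlow hhigh hx k) ?_
    filter_upwards [ctr_ae_mem hlow hhigh] with t ht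
    exact ctr_inv_le (by linarith [ht.2]) (by linarith [ht.1]) k
  have : (0:ℝ) < ((x - a) ^ k)⁻¹ := by positivity
  linarith

/-- Cauchy–Schwarz for real integrals. -/
lemma ctr_cauchy_schwarz {μ : Measure ℝ} {f g : ℝ → ℝ}
    (hfg : Integrable (fun t => f t * g t) μ)
    (hf : Integrable (fun t => f t ^ 2) μ)
    (hg : Integrable (fun t => g t ^ 2) μ) :
    (∫ t, f t * g t ∂μ) ^ 2 ≤ (∫ t, f t ^ 2 ∂μ) * ∫ t, g t ^ 2 ∂μ := by
  set A := ∫ t, f t ^ 2 ∂μ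
  set B := ∫ t, f t * g t ∂μ
  set C := ∫ t, g t ^ 2 ∂μ
  have key : ∀ r : ℝ, 0 ≤ A * (r * r) + (2 * B) * r + C := by
    intro r
    have h0 : 0 ≤ ∫ t, (r * f t + g t) ^ 2 ∂μ :=
      integral_nonneg fun t => sq_nonneg _
    have hexp : ∫ t, (r * f t + g t) ^ 2 ∂μ
        = A * (r * r) + (2 * B) * r + C := by
      have : (fun t => (r * f t + g t) ^ 2)
          = fun t => (r * r) * f t ^ 2 + (2 * r) * (f t * g t) + g t ^ 2 := by
        funext t; ring
      have h1 : Integrable (fun t => (r * r) * f t ^ 2 + (2 * r) * (f t * g t)) μ :=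
        (hf.const_mul _).add (hfg.const_mul _)
      rw [this, integral_add h1 hg, integral_add (hf.const_mul _) (hfg.const_mul _),
        integral_const_mul, integral_const_mul]
      ring
    linarith [hexp ▸ h0]
  have hd := discrim_le_zero key
  rw [discrim] at hd
  nlinarith [hd]

lemma ctr_hasDeriv1 [IsProbabilityMeasure μ]
    (hlow : μ (Set.Iio a) = 0) (hhigh : μ (Set.Ioi b) = 0)
    {x : ℝ} (hx : b < x) :
    HasDerivAt (fun y => ∫ t, (y - t)⁻¹ ∂μ) (-∫ t, ((x - t) ^ 2)⁻¹ ∂μ) x := by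
  set ε := (x - b) / 2 with hε
  have hε0 : 0 < ε := by dsimp [ε]; linarith
  have key := hasDerivAt_integral_of_dominated_loc_of_deriv_le (μ := μ)
    (F := fun y t => (y - t)⁻¹) (F' := fun y t => -((y - t) ^ 2)⁻¹)
    (x₀ := x) (bound := fun _ => (ε ^ 2)⁻¹) (Metric.ball_mem_nhds x hε0)
    (Filter.Eventually.of_forall fun y =>
      (by simpa using (ctr_meas y 1).aestronglyMeasurable : AEStronglyMeasurable (fun t : ℝ => (y - t)⁻¹) μ))
    (by simpa using ctr_integrable hlow hhigh hx 1)
    ((ctr_meas x 2).neg.aestronglyMeasurable)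
    ?_ (integrable_const _) ?_
  · rw [← integral_neg]; exact key.2
  · filter_upwards [ctr_ae_mem hlow hhigh] with t ht y hy
    have hxy : |y - x| < ε := by simpa [Real.dist_eq] using hy
    have h0 := abs_lt.mp hxy
    have hb := ht.2
    have h1 : ε ≤ y - t := by dsimp [ε] at *; linarith
    rw [norm_neg, Real.norm_eq_abs,
      abs_of_nonneg (inv_nonneg.mpr (pow_nonneg (by linarith) 2))]
    exact ctr_inv_le hε0 h1 2
  · filter_upwards [ctr_ae_mem hlow hhigh] with t ht y hy
    have hxy : |y - x| < ε := by simpa [Real.dist_eq] using hy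
    have := abs_lt.mp hxy
    have hne : y - t ≠ 0 := by
      have hb := ht.2; dsimp [ε] at *; intro h; nlinarith [h]
    have hd := ((hasDerivAt_id y).sub_const t).inv hne
    refine hd.congr_deriv ?_
    simp only [id_eq, Pi.pow_apply]
    field_simp

lemma ctr_hasDeriv2 [IsProbabilityMeasure μ]
    (hlow : μ (Set.Iio a) = 0) (hhigh : μ (Set.Ioi b) = 0)
    {x : ℝ} (hx : b < x) :
    HasDerivAt (fun y => ∫ t, ((y - t) ^ 2)⁻¹ ∂μ)
      (-(2 * ∫ t, ((x - t) ^ 3)⁻¹ ∂μ)) x := by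
  set ε := (x - b) / 2 with hε
  have hε0 : 0 < ε := by dsimp [ε]; linarith
  have key := hasDerivAt_integral_of_dominated_loc_of_deriv_le (μ := μ)
    (F := fun y t => ((y - t) ^ 2)⁻¹) (F' := fun y t => -(2 * ((y - t) ^ 3)⁻¹))
    (x₀ := x) (bound := fun _ => 2 * (ε ^ 3)⁻¹) (Metric.ball_mem_nhds x hε0)
    (Filter.Eventually.of_forall fun y => (ctr_meas y 2).aestronglyMeasurable)
    (ctr_integrable hlow hhigh hx 2)
    (((ctr_meas x 3).const_mul 2).neg.aestronglyMeasurable)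
    ?_ (integrable_const _) ?_
  · have : ∫ t, -(2 * ((x - t) ^ 3)⁻¹) ∂μ = -(2 * ∫ t, ((x - t) ^ 3)⁻¹ ∂μ) := by
      rw [integral_neg, integral_const_mul]
    rw [← this]; exact key.2
  · filter_upwards [ctr_ae_mem hlow hhigh] with t ht y hy
    have hxy : |y - x| < ε := by simpa [Real.dist_eq] using hy
    have h0 := abs_lt.mp hxy
    have hb := ht.2
    have h1 : ε ≤ y - t := by dsimp [ε] at *; linarith
    have hnn : (0:ℝ) ≤ 2 * ((y - t) ^ 3)⁻¹ := by
      have : (0:ℝ) ≤ y - t := by linarith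
      positivity
    rw [norm_neg, Real.norm_eq_abs, abs_of_nonneg hnn]
    have := ctr_inv_le hε0 h1 3
    nlinarith
  · filter_upwards [ctr_ae_mem hlow hhigh] with t ht y hy
    have hxy : |y - x| < ε := by simpa [Real.dist_eq] using hy
    have h0 := abs_lt.mp hxy
    have hb := ht.2
    have hne : y - t ≠ 0 := by dsimp [ε] at *; intro h; nlinarith [h]
    have hd := (((hasDerivAt_id y).sub_const t).pow 2).inv (pow_ne_zero 2 hne)
    refine hd.congr_deriv ?_
    simp only [id_eq, Pi.pow_apply]
    field_simp
    ring

end Aux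

section Main

variable {μ : Measure ℝ} {a b : ℝ}

lemma ctr_int1 [IsProbabilityMeasure μ]
    (hlow : μ (Set.Iio a) = 0) (hhigh : μ (Set.Ioi b) = 0)
    {x : ℝ} (hx : b < x) : Integrable (fun t => (x - t)⁻¹) μ := by
  simpa using ctr_integrable hlow hhigh hx 1

lemma ctr_Gpos [IsProbabilityMeasure μ]
    (hlow : μ (Set.Iio a) = 0) (hhigh : μ (Set.Ioi b) = 0)
    {x : ℝ} (hx : b < x) : 0 < ∫ t, (x - t)⁻¹ ∂μ := by
  have := ctr_pos hlow hhigh hx 1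
  simpa using this

lemma ctr_cs1 [IsProbabilityMeasure μ]
    (hlow : μ (Set.Iio a) = 0) (hhigh : μ (Set.Ioi b) = 0)
    {x : ℝ} (hx : b < x) :
    (∫ t, (x - t)⁻¹ ∂μ) ^ 2 ≤ ∫ t, ((x - t) ^ 2)⁻¹ ∂μ := by
  have key := ctr_cauchy_schwarz (μ := μ) (f := fun t => (x - t)⁻¹)
    (g := fun _ => (1 : ℝ))
    (by simpa using ctr_int1 hlow hhigh hx)
    (by simpa [inv_pow] using ctr_integrable hlow hhigh hx 2)
    (by simpa using (integrable_const (1:ℝ) : Integrable (fun _ : ℝ => (1:ℝ)) μ))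
  simpa [inv_pow] using key

lemma ctr_cs2 [IsProbabilityMeasure μ]
    (hlow : μ (Set.Iio a) = 0) (hhigh : μ (Set.Ioi b) = 0)
    {x : ℝ} (hx : b < x) :
    (∫ t, ((x - t) ^ 2)⁻¹ ∂μ) ^ 2
      ≤ (∫ t, (x - t)⁻¹ ∂μ) * ∫ t, ((x - t) ^ 3)⁻¹ ∂μ := by
  set f : ℝ → ℝ := fun t => Real.sqrt ((x - t)⁻¹) with hf
  set g : ℝ → ℝ := fun t => Real.sqrt (((x - t) ^ 3)⁻¹) with hg
  have hmem := ctr_ae_mem hlow hhigh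
  have hae1 : (fun t => f t * g t) =ᵐ[μ] fun t => ((x - t) ^ 2)⁻¹ := by
    filter_upwards [hmem] with t ht
    have h0 : (0:ℝ) < x - t := by linarith [ht.2]
    simp only [hf, hg]
    rw [← Real.sqrt_mul (inv_nonneg.mpr h0.le)]
    have he : (x - t)⁻¹ * ((x - t) ^ 3)⁻¹ = (((x - t) ^ 2)⁻¹) ^ 2 := by
      field_simp
    rw [he, Real.sqrt_sq (by positivity)]
  have hae2 : (fun t => f t ^ 2) =ᵐ[μ] fun t => (x - t)⁻¹ := by
    filter_upwards [hmem] with t ht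
    have h0 : (0:ℝ) < x - t := by linarith [ht.2]
    simp only [hf]
    rw [Real.sq_sqrt (inv_nonneg.mpr h0.le)]
  have hae3 : (fun t => g t ^ 2) =ᵐ[μ] fun t => ((x - t) ^ 3)⁻¹ := by
    filter_upwards [hmem] with t ht
    have h0 : (0:ℝ) < x - t := by linarith [ht.2]
    simp only [hg]
    rw [Real.sq_sqrt (by positivity)]
  have key := ctr_cauchy_schwarz (μ := μ) (f := f) (g := g)
    ((ctr_integrable hlow hhigh hx 2).congr hae1.symm)
    ((ctr_int1 hlow hhigh hx).congr hae2.symm)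
    ((ctr_integrable hlow hhigh hx 3).congr hae3.symm)
  rw [integral_congr_ae hae1, integral_congr_ae hae2, integral_congr_ae hae3] at key
  exact key

lemma ctr_hasDerivPhi [IsProbabilityMeasure μ]
    (hlow : μ (Set.Iio a) = 0) (hhigh : μ (Set.Ioi b) = 0)
    {x : ℝ} (hx : b < x) :
    HasDerivAt
      (fun y => -((∫ t, (y - t)⁻¹ ∂μ) ^ 2 / ∫ t, ((y - t) ^ 2)⁻¹ ∂μ))
      (2 * (∫ t, (x - t)⁻¹ ∂μ) *
        ((∫ t, ((x - t) ^ 2)⁻¹ ∂μ) ^ 2 -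
          (∫ t, (x - t)⁻¹ ∂μ) * ∫ t, ((x - t) ^ 3)⁻¹ ∂μ) /
        (∫ t, ((x - t) ^ 2)⁻¹ ∂μ) ^ 2) x := by
  have h2 := ctr_pos hlow hhigh hx 2
  have hd := (((ctr_hasDeriv1 hlow hhigh hx).pow 2).div
    (ctr_hasDeriv2 hlow hhigh hx) h2.ne').neg
  refine hd.congr_deriv ?_
  simp only [id_eq, Pi.pow_apply]
  field_simp
  ring

end Main


noncomputable def cauchy (μ : Measure ℝ) (z : ℝ) : ℝ := ∫ t, (z - t)⁻¹ ∂μ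

noncomputable def cauchyDeriv (μ : Measure ℝ) (z : ℝ) : ℝ := -∫ t, ((z - t) ^ 2)⁻¹ ∂μ

theorem cauchy_transform_ratio (μ : Measure ℝ) [IsProbabilityMeasure μ] (a b : ℝ)
    (hlow : μ (Set.Iio a) = 0) (hhigh : μ (Set.Ioi b) = 0)
    (hbsup : ∀ ε > 0, 0 < μ (Set.Ioc (b - ε) b)) :
    ContinuousOn (fun x => (cauchy μ x) ^ 2 / cauchyDeriv μ x) (Set.Ioi b) ∧
    AntitoneOn (fun x => (cauchy μ x) ^ 2 / cauchyDeriv μ x) (Set.Ioi b) ∧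
    ∀ x ∈ Set.Ioi b, (cauchy μ x) ^ 2 / cauchyDeriv μ x ∈ Set.Icc (-1 : ℝ) 0 := by
  have hfun : (fun x => (cauchy μ x) ^ 2 / cauchyDeriv μ x)
      = fun x => -((∫ t, (x - t)⁻¹ ∂μ) ^ 2 / ∫ t, ((x - t) ^ 2)⁻¹ ∂μ) := by
    funext x
    rw [cauchy, cauchyDeriv, div_neg]
  rw [hfun]
  refine ⟨?_, ?_, ?_⟩
  · intro x hx
    exact ((ctr_hasDerivPhi hlow hhigh hx).differentiableAt.continuousAt).continuousWithinAt
  · apply antitoneOn_of_deriv_nonpos (convex_Ioi b)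
    · intro x hx
      exact ((ctr_hasDerivPhi hlow hhigh hx).differentiableAt.continuousAt).continuousWithinAt
    · rw [interior_Ioi]
      exact fun x hx =>
        (ctr_hasDerivPhi hlow hhigh hx).differentiableAt.differentiableWithinAt
    · rw [interior_Ioi]
      intro x hx
      rw [(ctr_hasDerivPhi hlow hhigh hx).deriv]
      apply div_nonpos_of_nonpos_of_nonneg
      · have hG := ctr_Gpos hlow hhigh hx
        have hcs2 := ctr_cs2 hlow hhigh hx
        nlinarith
      · positivity
  · intro x hx
    have hG := ctr_Gpos hlow hhigh hx
    have h2 := ctr_pos hlow hhigh hx 2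
    have hcs1 := ctr_cs1 hlow hhigh hx
    rw [Set.mem_Icc, cauchy, cauchyDeriv, div_neg]
    constructor
    · rw [neg_le, neg_neg]
      exact (div_le_one h2).mpr hcs1
    · exact neg_nonpos.mpr (div_nonneg (sq_nonneg _) h2.le)
end

section
/- Lemma (monotonicity of the empirical FDR estimate). Let λ_1 ≥ λ_2 ≥ … ≥ λ_n be real numbers and let r̂ ∈ {1, …, n−1} satisfy λ_{r̂} > λ_{r̂+1}. Define Ĝ(y) = (1/(n−r̂)) Σ_{j=r̂+1}^n 1/(y−λ_j), Ĝ'(y) = −(1/(n−r̂)) Σ_{j=r̂+1}^n 1/(y−λ_j)², and F̂DR(k) = 1 + (1/k) Σ_{i=1}^{min(k,r̂)} Ĝ(λ_i)²/Ĝ'(λ_i) for k ∈ {1, …, n}. Then the function k ↦ F̂DR(k) is nondecreasing on {1, …, n} and its values lie in [0, 1]. -/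
/-!
Lemma (monotonicity of the empirical FDR estimate).  Let `λ₁ ≥ λ₂ ≥ … ≥ λₙ` be real numbers
and let `r̂ ∈ {1, …, n−1}` satisfy `λ_{r̂} > λ_{r̂+1}`.  Define
`Ĝ(y) = (1/(n−r̂)) Σ_{j=r̂+1}^n (y−λ_j)⁻¹`, `Ĝ'(y) = −(1/(n−r̂)) Σ_{j=r̂+1}^n (y−λ_j)⁻²`,
and `F̂DR(k) = 1 + (1/k) Σ_{i=1}^{min(k,r̂)} Ĝ(λ_i)²/Ĝ'(λ_i)` for `k ∈ {1, …, n}`.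
Then `k ↦ F̂DR(k)` is nondecreasing on `{1, …, n}` and its values lie in `[0,1]`.

Indexing convention: the sequence is `lam : ℕ → ℝ`, `lam i` being `λ_{i+1}` (0-based), so the
1-based sum `Σ_{j=r̂+1}^n` becomes a sum over `j ∈ Finset.Ico r̂ n`.
-/

open Finset

noncomputable def Ghat (n : ℕ) (lam : ℕ → ℝ) (rhat : ℕ) (y : ℝ) : ℝ :=
  ((n : ℝ) - (rhat : ℝ))⁻¹ * ∑ j ∈ Finset.Ico rhat n, (y - lam j)⁻¹

noncomputable def GhatDeriv (n : ℕ) (lam : ℕ → ℝ) (rhat : ℕ) (y : ℝ) : ℝ :=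
  -(((n : ℝ) - (rhat : ℝ))⁻¹ * ∑ j ∈ Finset.Ico rhat n, ((y - lam j) ^ 2)⁻¹)

noncomputable def FDRhat (n : ℕ) (lam : ℕ → ℝ) (rhat k : ℕ) : ℝ :=
  1 + (k : ℝ)⁻¹ * ∑ i ∈ Finset.range (min k rhat),
      (Ghat n lam rhat (lam i)) ^ 2 / GhatDeriv n lam rhat (lam i)

lemma aux_form (c A C : ℝ) (hc : c ≠ 0) (hC : C ≠ 0) :
    (c * A) ^ 2 / (-(c * C)) = -(c * (A ^ 2 / C)) := by
  field_simp

/-- Cauchy–Schwarz: `(∑ u²)² ≤ (∑ u)(∑ u³)` for nonneg `u`. -/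
lemma cs_cube (T : Finset ℕ) (u : ℕ → ℝ) (hu : ∀ j ∈ T, 0 ≤ u j) :
    (∑ j ∈ T, u j ^ 2) ^ 2 ≤ (∑ j ∈ T, u j) * ∑ j ∈ T, u j ^ 3 :=
  Finset.sum_sq_le_sum_mul_sum_of_sq_eq_mul T hu
    (fun i hi => pow_nonneg (hu i hi) 3) (fun i hi => by ring)

/-- `y ↦ (∑ (y-λ_j)⁻¹)² / (∑ ((y-λ_j)²)⁻¹)` is monotone on `Ici b` when `λ_j < b`. -/
lemma ratio_monotoneOn (T : Finset ℕ) (lam : ℕ → ℝ) (b : ℝ) (hb : ∀ j ∈ T, lam j < b) :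
    MonotoneOn (fun y => (∑ j ∈ T, (y - lam j)⁻¹) ^ 2 / ∑ j ∈ T, ((y - lam j) ^ 2)⁻¹)
      (Set.Ici b) := by
  have key : ∀ x : ℝ, (∀ j ∈ T, lam j < x) →
      HasDerivAt (fun y => (∑ j ∈ T, (y - lam j)⁻¹) ^ 2 / ∑ j ∈ T, ((y - lam j) ^ 2)⁻¹)
        (((2 : ℝ) * (∑ j ∈ T, (x - lam j)⁻¹) ^ 1 * (-∑ j ∈ T, ((x - lam j)⁻¹) ^ 2)
            * ∑ j ∈ T, ((x - lam j) ^ 2)⁻¹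
          - (∑ j ∈ T, (x - lam j)⁻¹) ^ 2 * (-(2 * ∑ j ∈ T, ((x - lam j)⁻¹) ^ 3)))
          / (∑ j ∈ T, ((x - lam j) ^ 2)⁻¹) ^ 2) x := by
    intro x hx
    have hne : ∀ j ∈ T, x - lam j ≠ 0 := fun j hj => sub_ne_zero.2 (ne_of_gt (hx j hj))
    have hA : HasDerivAt (fun y => ∑ j ∈ T, (y - lam j)⁻¹)
        (-∑ j ∈ T, ((x - lam j)⁻¹) ^ 2) x := by
      have := HasDerivAt.fun_sum (fun j hj =>
        (((hasDerivAt_id x).sub_const (lam j)).inv (hne j hj)))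
      refine this.congr_deriv (Eq.symm ?_)
      simp only [id_eq, Pi.pow_apply]
      rw [← Finset.sum_neg_distrib]
      exact Finset.sum_congr rfl fun j hj => by
        field_simp
    have hC : HasDerivAt (fun y => ∑ j ∈ T, ((y - lam j) ^ 2)⁻¹)
        (-(2 * ∑ j ∈ T, ((x - lam j)⁻¹) ^ 3)) x := by
      have := HasDerivAt.fun_sum (fun j hj =>
        ((((hasDerivAt_id x).sub_const (lam j)).pow 2).inv
          (pow_ne_zero 2 (hne j hj))))
      refine this.congr_deriv (Eq.symm ?_)
      simp only [id_eq, Pi.pow_apply]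
      rw [Finset.mul_sum, ← Finset.sum_neg_distrib]
      refine Finset.sum_congr rfl fun j hj => ?_
      have h := hne j hj
      field_simp
      ring
    have hCne : (∑ j ∈ T, ((x - lam j) ^ 2)⁻¹) ≠ 0 ∨ T = ∅ := by
      rcases T.eq_empty_or_nonempty with h | h
      · exact Or.inr h
      · exact Or.inl (ne_of_gt (Finset.sum_pos
          (fun j hj => inv_pos.2 (pow_pos (sub_pos.2 (hx j hj)) 2)) h))
    rcases hCne with hCne | hT
    · exact (hA.pow 2).div hC hCne
    · subst hT; simp only [Finset.sum_empty]
      simpa using (hasDerivAt_const x (0:ℝ)).div_const 0 |>.congr_deriv (by simp)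
  have hxgt : ∀ x ∈ Set.Ici b, ∀ j ∈ T, lam j < x :=
    fun x hx j hj => lt_of_lt_of_le (hb j hj) hx
  refine monotoneOn_of_deriv_nonneg (convex_Ici b)
    (fun x hx => ((key x (hxgt x hx)).continuousAt).continuousWithinAt)
    (fun x hx => ((key x (hxgt x (interior_subset hx))).differentiableAt).differentiableWithinAt)
    (fun x hx => ?_)
  have hx' := hxgt x (interior_subset hx)
  rw [(key x hx').deriv]
  have hA : 0 ≤ ∑ j ∈ T, (x - lam j)⁻¹ :=
    Finset.sum_nonneg fun j hj => le_of_lt (inv_pos.2 (sub_pos.2 (hx' j hj)))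
  have hcs := cs_cube T (fun j => (x - lam j)⁻¹)
    (fun j hj => le_of_lt (inv_pos.2 (sub_pos.2 (hx' j hj))))
  have hCeq : (∑ j ∈ T, ((x - lam j) ^ 2)⁻¹) = ∑ j ∈ T, ((x - lam j)⁻¹) ^ 2 := by
    exact Finset.sum_congr rfl fun j hj => (inv_pow _ _).symm
  rw [hCeq]
  have hnum : 0 ≤ 2 * (∑ j ∈ T, (x - lam j)⁻¹) ^ 1 * (-∑ j ∈ T, ((x - lam j)⁻¹) ^ 2)
      * (∑ j ∈ T, ((x - lam j)⁻¹) ^ 2)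
      - (∑ j ∈ T, (x - lam j)⁻¹) ^ 2 * (-(2 * ∑ j ∈ T, ((x - lam j)⁻¹) ^ 3)) := by
    nlinarith [hcs, hA]
  exact div_nonneg hnum (sq_nonneg _)

/-- One monotone step of the FDR estimate. -/
lemma fdr_step (g : ℕ → ℝ) (r : ℕ)
    (hgm : ∀ i j, i ≤ j → j < r → g i ≤ g j)
    (hub : ∀ i, i < r → g i ≤ 0) (k : ℕ) (hk : 1 ≤ k) :
    1 + (k : ℝ)⁻¹ * ∑ i ∈ Finset.range (min k r), g i ≤
      1 + ((k + 1 : ℕ) : ℝ)⁻¹ * ∑ i ∈ Finset.range (min (k + 1) r), g i := by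
  have hk0 : (0 : ℝ) < (k : ℝ) := by exact_mod_cast hk
  have hk10 : (0 : ℝ) < ((k + 1 : ℕ) : ℝ) := by positivity
  rcases lt_or_ge k r with h | h
  · have h1 : min k r = k := min_eq_left h.le
    have h2 : min (k + 1) r = k + 1 := min_eq_left h
    rw [h1, h2, Finset.sum_range_succ]
    have hS : ∑ i ∈ Finset.range k, g i ≤ (k : ℝ) * g k := by
      calc ∑ i ∈ Finset.range k, g i ≤ ∑ _i ∈ Finset.range k, g k :=
            Finset.sum_le_sum fun i hi => hgm i k (Finset.mem_range.1 hi).le h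
        _ = (k : ℝ) * g k := by simp [mul_comm]
    have hcast : ((k + 1 : ℕ) : ℝ) = (k : ℝ) + 1 := by push_cast; ring
    rw [hcast]
    rw [inv_mul_eq_div, inv_mul_eq_div]
    have hd : (∑ i ∈ Finset.range k, g i) / (k : ℝ) ≤
        (∑ i ∈ Finset.range k, g i + g k) / ((k : ℝ) + 1) := by
      rw [div_le_div_iff₀ hk0 (by linarith)]
      nlinarith [hS]
    linarith
  · have h1 : min k r = r := min_eq_right h
    have h2 : min (k + 1) r = r := min_eq_right (by omega)
    rw [h1, h2]
    have hS : ∑ i ∈ Finset.range r, g i ≤ 0 :=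
      Finset.sum_nonpos fun i hi => hub i (Finset.mem_range.1 hi)
    have hinv : ((k + 1 : ℕ) : ℝ)⁻¹ ≤ (k : ℝ)⁻¹ := by
      apply inv_anti₀ hk0; push_cast; linarith
    nlinarith [mul_nonneg (sub_nonneg.2 hinv) (neg_nonneg.2 hS)]

theorem fdrhat_monotone_and_bounded (n : ℕ) (lam : ℕ → ℝ)
    (hmono : ∀ i j, i ≤ j → j < n → lam j ≤ lam i)
    (rhat : ℕ) (hr1 : 1 ≤ rhat) (hr2 : rhat ≤ n - 1)
    (hgap : lam rhat < lam (rhat - 1)) :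
    (∀ k k', 1 ≤ k → k ≤ k' → k' ≤ n → FDRhat n lam rhat k ≤ FDRhat n lam rhat k') ∧
    (∀ k, 1 ≤ k → k ≤ n → FDRhat n lam rhat k ∈ Set.Icc (0 : ℝ) 1) := by
  have hn : rhat < n := by omega
  set T : Finset ℕ := Finset.Ico rhat n with hT
  have hTne : T.Nonempty := Finset.nonempty_Ico.2 hn
  have hb : ∀ j ∈ T, lam j < lam (rhat - 1) := by
    intro j hj
    rw [hT, Finset.mem_Ico] at hj
    exact lt_of_le_of_lt (hmono rhat j hj.1 hj.2) hgap
  have hnr : (rhat : ℝ) < (n : ℝ) := by exact_mod_cast hn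
  have hc : (0 : ℝ) < ((n : ℝ) - rhat)⁻¹ := inv_pos.2 (by linarith)
  have hApos : ∀ y, lam (rhat - 1) ≤ y → ∀ j ∈ T, 0 < y - lam j :=
    fun y hy j hj => sub_pos.2 (lt_of_lt_of_le (hb j hj) hy)
  have hCpos : ∀ y, lam (rhat - 1) ≤ y → (0 : ℝ) < ∑ j ∈ T, ((y - lam j) ^ 2)⁻¹ :=
    fun y hy => Finset.sum_pos
      (fun j hj => inv_pos.2 (pow_pos (hApos y hy j hj) 2)) hTne
  have hgform : ∀ y, lam (rhat - 1) ≤ y →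
      Ghat n lam rhat y ^ 2 / GhatDeriv n lam rhat y =
      -(((n : ℝ) - rhat)⁻¹ *
        ((∑ j ∈ T, (y - lam j)⁻¹) ^ 2 / ∑ j ∈ T, ((y - lam j) ^ 2)⁻¹)) := by
    intro y hy
    have hC := hCpos y hy
    unfold Ghat GhatDeriv
    rw [← hT]
    exact aux_form _ _ _ (ne_of_gt hc) (ne_of_gt hC)
  set g : ℕ → ℝ := fun i => Ghat n lam rhat (lam i) ^ 2 / GhatDeriv n lam rhat (lam i)
    with hg
  have hlami : ∀ i, i < rhat → lam (rhat - 1) ≤ lam i :=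
    fun i hi => hmono i (rhat - 1) (by omega) (by omega)
  have hgm : ∀ i j, i ≤ j → j < rhat → g i ≤ g j := by
    intro i j hij hj
    have h1 := hlami i (by omega)
    have h2 := hlami j hj
    have hmn := ratio_monotoneOn T lam (lam (rhat - 1)) hb
      (Set.mem_Ici.2 h2) (Set.mem_Ici.2 h1) (hmono i j hij (by omega))
    rw [hg]
    simp only
    rw [hgform _ h1, hgform _ h2]
    have := mul_le_mul_of_nonneg_left hmn hc.le
    linarith
  have hub : ∀ i, i < rhat → g i ≤ 0 := by
    intro i hi
    have h1 := hlami i hi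
    rw [hg]; simp only
    rw [hgform _ h1]
    have hC := hCpos _ h1
    have : 0 ≤ ((n : ℝ) - rhat)⁻¹ *
        ((∑ j ∈ T, (lam i - lam j)⁻¹) ^ 2 / ∑ j ∈ T, ((lam i - lam j) ^ 2)⁻¹) := by
      positivity
    linarith
  have hlb : ∀ i, i < rhat → -1 ≤ g i := by
    intro i hi
    have h1 := hlami i hi
    rw [hg]; simp only
    rw [hgform _ h1]
    have hC := hCpos _ h1
    have hcard : ((T.card : ℝ)) = (n : ℝ) - rhat := by
      rw [hT, Nat.card_Ico, Nat.cast_sub hn.le]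
    have hcs : (∑ j ∈ T, (lam i - lam j)⁻¹) ^ 2 ≤
        ((n : ℝ) - rhat) * ∑ j ∈ T, ((lam i - lam j) ^ 2)⁻¹ := by
      have h := sq_sum_le_card_mul_sum_sq (s := T)
        (f := fun j => (lam i - lam j)⁻¹)
      rw [hcard] at h
      refine h.trans (le_of_eq ?_)
      exact congrArg _ (Finset.sum_congr rfl fun j hj => inv_pow _ _)
    have hX : (∑ j ∈ T, (lam i - lam j)⁻¹) ^ 2 / (∑ j ∈ T, ((lam i - lam j) ^ 2)⁻¹)
        ≤ (n : ℝ) - rhat := (div_le_iff₀ hC).2 hcs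
    have h2 : ((n : ℝ) - rhat)⁻¹ *
        ((∑ j ∈ T, (lam i - lam j)⁻¹) ^ 2 / ∑ j ∈ T, ((lam i - lam j) ^ 2)⁻¹)
        ≤ ((n : ℝ) - rhat)⁻¹ * ((n : ℝ) - rhat) :=
      mul_le_mul_of_nonneg_left hX hc.le
    rw [inv_mul_cancel₀ (by linarith : (n : ℝ) - rhat ≠ 0)] at h2
    linarith
  constructor
  · intro k k' hk hkk' _
    have key : ∀ m, k ≤ m → FDRhat n lam rhat k ≤ FDRhat n lam rhat m := by
      intro m hm
      induction m, hm using Nat.le_induction with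
      | base => exact le_rfl
      | succ m hm ih =>
        refine le_trans ih ?_
        show FDRhat n lam rhat m ≤ FDRhat n lam rhat (m + 1)
        unfold FDRhat
        exact fdr_step g rhat hgm hub m (hk.trans hm)
    exact key k' hkk'
  · intro k hk hkn
    have hkpos : (0 : ℝ) < (k : ℝ) := by exact_mod_cast hk
    have hmink : (min k rhat : ℝ) ≤ (k : ℝ) := by exact_mod_cast min_le_left k rhat
    have hS0 : ∑ i ∈ Finset.range (min k rhat), g i ≤ 0 :=
      Finset.sum_nonpos fun i hi => hub i (lt_of_lt_of_le (Finset.mem_range.1 hi)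
        (min_le_right _ _))
    have hSl : -(min k rhat : ℝ) ≤ ∑ i ∈ Finset.range (min k rhat), g i := by
      calc -(min k rhat : ℝ) = ∑ _i ∈ Finset.range (min k rhat), (-1 : ℝ) := by
            simp
        _ ≤ ∑ i ∈ Finset.range (min k rhat), g i :=
            Finset.sum_le_sum fun i hi => hlb i (lt_of_lt_of_le (Finset.mem_range.1 hi)
              (min_le_right _ _))
    unfold FDRhat
    constructor
    · have h1 : (k : ℝ)⁻¹ * (-(min k rhat : ℝ)) ≤
          (k : ℝ)⁻¹ * ∑ i ∈ Finset.range (min k rhat), g i :=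
        mul_le_mul_of_nonneg_left hSl (le_of_lt (inv_pos.2 hkpos))
      have h2 : (-1 : ℝ) ≤ (k : ℝ)⁻¹ * (-(min k rhat : ℝ)) := by
        have h3 : (k : ℝ)⁻¹ * (k : ℝ) = 1 := inv_mul_cancel₀ (ne_of_gt hkpos)
        nlinarith [inv_pos.2 hkpos]
      linarith
    · have : (k : ℝ)⁻¹ * ∑ i ∈ Finset.range (min k rhat), g i ≤ 0 :=
        mul_nonpos_of_nonneg_of_nonpos (le_of_lt (inv_pos.2 hkpos)) hS0
      linarith
end

section
/- Lemma (semicircle quantile spacings). For n ∈ ℕ and i ∈ {1, …, n}, define the quantile γ_i^{(n)} ∈ [−2, 2] by ∫_{γ_i^{(n)}}^{2} ϱ(t) dt = i/n, where ϱ is the semicircle density. Then for all sufficiently large n and all i ∈ {1, …, n−1}: |γ_i^{(n)} − γ_{i+1}^{(n)}| ≤ π² · n^{−2/3}. -/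
/-!
Lemma (semicircle quantile spacings).  For `n ∈ ℕ` and `i ∈ {1, …, n}` define the quantile
`γ_i^{(n)} ∈ [−2, 2]` by `∫_{γ_i^{(n)}}^{2} ϱ(t) dt = i/n`, where
`ϱ(t) = (1/(2π)) √((4−t²)₊)` is the semicircle density.  Then for all sufficiently large `n`
and all `i ∈ {1, …, n−1}`: `|γ_i^{(n)} − γ_{i+1}^{(n)}| ≤ π² n^{−2/3}`.
-/

open Real Filter

noncomputable def semicircleDensity (t : ℝ) : ℝ :=
  (2 * π)⁻¹ * Real.sqrt (max (4 - t ^ 2) 0)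

lemma semicircleDensity_cont : Continuous semicircleDensity := by
  unfold semicircleDensity
  fun_prop

lemma semicircleDensity_nonneg (t : ℝ) : 0 ≤ semicircleDensity t := by
  unfold semicircleDensity
  positivity

lemma semicircleDensity_intble (a b : ℝ) :
    IntervalIntegrable semicircleDensity MeasureTheory.volume a b :=
  semicircleDensity_cont.intervalIntegrable a b

lemma semicircleDensity_even (t : ℝ) : semicircleDensity (-t) = semicircleDensity t := by
  simp [semicircleDensity, neg_pow]

/-- superadditivity of `x ^ (3/2)` -/
lemma rpow_superadd {x y : ℝ} (hx : 0 ≤ x) (hy : 0 ≤ y) :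
    x ^ ((3:ℝ)/2) + y ^ ((3:ℝ)/2) ≤ (x + y) ^ ((3:ℝ)/2) := by
  have key : ∀ z : ℝ, 0 ≤ z → z ^ ((3:ℝ)/2) = z * z ^ ((1:ℝ)/2) := by
    intro z hz
    rw [show (3:ℝ)/2 = 1 + 1/2 by norm_num, Real.rpow_add' hz (by norm_num), Real.rpow_one]
  rw [key x hx, key y hy, key (x+y) (by linarith)]
  have h1 : x ^ ((1:ℝ)/2) ≤ (x+y) ^ ((1:ℝ)/2) :=
    Real.rpow_le_rpow hx (by linarith) (by norm_num)
  have h2 : y ^ ((1:ℝ)/2) ≤ (x+y) ^ ((1:ℝ)/2) :=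
    Real.rpow_le_rpow hy (by linarith) (by norm_num)
  have := Real.rpow_nonneg hx ((1:ℝ)/2)
  nlinarith [Real.rpow_nonneg hy ((1:ℝ)/2)]

lemma sqrt_integral (a b : ℝ) :
    ∫ t in a..b, (2 - t) ^ ((1:ℝ)/2) =
      ((2 - a) ^ ((3:ℝ)/2) - (2 - b) ^ ((3:ℝ)/2)) / (3/2) := by
  rw [intervalIntegral.integral_comp_sub_left (fun u : ℝ => u ^ ((1:ℝ)/2)) 2]
  rw [integral_rpow (Or.inl (by norm_num))]
  norm_num

/-- right-edge estimate -/
lemma edge_right {a b : ℝ} {n : ℕ} (hn : 1 ≤ n) (h0 : 0 ≤ a) (hab : a ≤ b) (hb2 : b ≤ 2)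
    (h : (∫ t in a..b, semicircleDensity t) ≤ 1 / n) :
    b - a ≤ (π ^ 2 / 2) * (n : ℝ) ^ (-(2:ℝ)/3) := by
  have hπ := Real.pi_gt_three
  have hπpos : (0:ℝ) < π := by linarith
  -- pointwise lower bound on [a, b]
  have hlow : ∀ t ∈ Set.Icc a b,
      (2 * π)⁻¹ * (Real.sqrt 2 * (2 - t) ^ ((1:ℝ)/2)) ≤ semicircleDensity t := by
    intro t ht
    obtain ⟨ht1, ht2⟩ := ht
    have h2t : (0:ℝ) ≤ 2 - t := by linarith
    have ht0 : (0:ℝ) ≤ t := le_trans h0 ht1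
    have hmax : max (4 - t ^ 2) 0 = 4 - t ^ 2 := by
      rw [max_eq_left]; nlinarith
    unfold semicircleDensity
    rw [hmax]
    have : Real.sqrt 2 * (2 - t) ^ ((1:ℝ)/2) ≤ Real.sqrt (4 - t ^ 2) := by
      rw [← Real.sqrt_eq_rpow, ← Real.sqrt_mul (by norm_num : (0:ℝ) ≤ 2)]
      apply Real.sqrt_le_sqrt
      nlinarith
    have hpos : (0:ℝ) ≤ (2 * π)⁻¹ := by positivity
    exact mul_le_mul_of_nonneg_left this hpos
  -- integral lower bound
  have hint : (∫ t in a..b, (2 * π)⁻¹ * (Real.sqrt 2 * (2 - t) ^ ((1:ℝ)/2))) ≤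
      ∫ t in a..b, semicircleDensity t := by
    apply intervalIntegral.integral_mono_on hab _ (semicircleDensity_intble a b) hlow
    apply Continuous.intervalIntegrable
    have hc : Continuous fun t : ℝ => (2 - t) ^ ((1:ℝ)/2) := by
      have : ∀ t : ℝ, (2 - t) ^ ((1:ℝ)/2) = Real.sqrt (2 - t) := fun t =>
        (Real.sqrt_eq_rpow _).symm
      simp only [this]
      fun_prop
    fun_prop
  have hcalc : (∫ t in a..b, (2 * π)⁻¹ * (Real.sqrt 2 * (2 - t) ^ ((1:ℝ)/2))) =
      (2 * π)⁻¹ * Real.sqrt 2 * (((2 - a) ^ ((3:ℝ)/2) - (2 - b) ^ ((3:ℝ)/2)) / (3/2)) := by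
    rw [← sqrt_integral a b, ← intervalIntegral.integral_const_mul]
    congr 1; ext t; ring
  -- superadditivity: (2-a)^{3/2} ≥ (2-b)^{3/2} + (b-a)^{3/2}
  have hsup : (2 - b) ^ ((3:ℝ)/2) + (b - a) ^ ((3:ℝ)/2) ≤ (2 - a) ^ ((3:ℝ)/2) := by
    have := rpow_superadd (x := 2 - b) (y := b - a) (by linarith) (by linarith)
    have heq : 2 - b + (b - a) = 2 - a := by ring
    rwa [heq] at this
  set L := b - a with hL
  have hLnn : 0 ≤ L := by simp [hL]; linarith
  have hkey : Real.sqrt 2 / (3 * π) * L ^ ((3:ℝ)/2) ≤ 1 / n := by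
    have h2 : (0:ℝ) < Real.sqrt 2 := Real.sqrt_pos.2 (by norm_num)
    have hD : L ^ ((3:ℝ)/2) ≤ (2 - a) ^ ((3:ℝ)/2) - (2 - b) ^ ((3:ℝ)/2) := by linarith
    have heq : (2 * π)⁻¹ * Real.sqrt 2 * (((2 - a) ^ ((3:ℝ)/2) - (2 - b) ^ ((3:ℝ)/2)) / (3/2))
        = Real.sqrt 2 / (3 * π) * ((2 - a) ^ ((3:ℝ)/2) - (2 - b) ^ ((3:ℝ)/2)) := by
      field_simp
    calc Real.sqrt 2 / (3 * π) * L ^ ((3:ℝ)/2)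
        ≤ Real.sqrt 2 / (3 * π) * ((2 - a) ^ ((3:ℝ)/2) - (2 - b) ^ ((3:ℝ)/2)) :=
          mul_le_mul_of_nonneg_left hD (by positivity)
      _ ≤ 1 / n := le_trans (le_of_eq (heq.symm.trans hcalc.symm)) (le_trans hint h)
  -- solve for L
  have hnpos : (0:ℝ) < n := by exact_mod_cast hn
  have h32 : L ^ ((3:ℝ)/2) ≤ 3 * π / Real.sqrt 2 * (1 / n) := by
    have h2 : (0:ℝ) < Real.sqrt 2 := Real.sqrt_pos.2 (by norm_num)
    rw [div_mul_eq_mul_div, le_div_iff₀ h2]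
    calc L ^ ((3:ℝ)/2) * Real.sqrt 2 = Real.sqrt 2 / (3 * π) * L ^ ((3:ℝ)/2) * (3 * π) := by
          field_simp
      _ ≤ 1 / n * (3 * π) := by
          apply mul_le_mul_of_nonneg_right hkey (by positivity)
      _ = 3 * π * (1 / n) := by ring
  have hC : (3 * π / Real.sqrt 2 * (1 / n)) ^ ((2:ℝ)/3) ≤ (π ^ 2 / 2) * (n:ℝ) ^ (-(2:ℝ)/3) := by
    have h2 : (0:ℝ) < Real.sqrt 2 := Real.sqrt_pos.2 (by norm_num)
    rw [Real.mul_rpow (by positivity) (by positivity)]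
    have hn23 : (1 / (n:ℝ)) ^ ((2:ℝ)/3) = (n:ℝ) ^ (-(2:ℝ)/3) := by
      rw [one_div, Real.inv_rpow hnpos.le, ← Real.rpow_neg hnpos.le, neg_div]
    rw [hn23]
    apply mul_le_mul_of_nonneg_right _ (Real.rpow_nonneg hnpos.le _)
    -- (3π/√2)^{2/3} ≤ π²/2
    have hx : (0:ℝ) ≤ 3 * π / Real.sqrt 2 := by positivity
    have hA : ((3 * π / Real.sqrt 2) ^ ((2:ℝ)/3)) ^ (3:ℕ) = (3 * π / Real.sqrt 2) ^ (2:ℕ) := by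
      rw [← Real.rpow_natCast ((3 * π / Real.sqrt 2) ^ ((2:ℝ)/3)) 3, ← Real.rpow_mul hx]
      norm_num
    have hB : (3 * π / Real.sqrt 2) ^ (2:ℕ) ≤ (π ^ 2 / 2) ^ (3:ℕ) := by
      have hs : Real.sqrt 2 ^ 2 = 2 := Real.sq_sqrt (by norm_num)
      have hl : (3 * π / Real.sqrt 2) ^ (2:ℕ) = 9 * π ^ 2 / 2 := by
        rw [div_pow, hs]; ring
      have h9 : 9 < π ^ 2 := by nlinarith
      rw [hl]
      nlinarith [h9, sq_nonneg (π ^ 2 - 9), sq_nonneg π, sq_nonneg (π^2)]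
    have := hA ▸ hB
    exact le_of_pow_le_pow_left₀ (by norm_num) (by positivity) this
  calc L = (L ^ ((3:ℝ)/2)) ^ ((2:ℝ)/3) := by
        rw [← Real.rpow_mul hLnn]; norm_num
    _ ≤ (3 * π / Real.sqrt 2 * (1 / n)) ^ ((2:ℝ)/3) :=
        Real.rpow_le_rpow (Real.rpow_nonneg hLnn _) h32 (by norm_num)
    _ ≤ (π ^ 2 / 2) * (n:ℝ) ^ (-(2:ℝ)/3) := hC

lemma edge_left {a b : ℝ} {n : ℕ} (hn : 1 ≤ n) (ha : -2 ≤ a) (hab : a ≤ b) (hb : b ≤ 0)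
    (h : (∫ t in a..b, semicircleDensity t) ≤ 1 / n) :
    b - a ≤ (π ^ 2 / 2) * (n : ℝ) ^ (-(2:ℝ)/3) := by
  have hrefl : (∫ t in (-b)..(-a), semicircleDensity t) ≤ 1 / n := by
    rw [← intervalIntegral.integral_comp_neg semicircleDensity]
    simpa [semicircleDensity_even] using h
  have := edge_right hn (by linarith) (by linarith) (by linarith) hrefl
  linarith

theorem semicircle_quantile_spacings (γ : ℕ → ℕ → ℝ)
    (hγmem : ∀ n i, 1 ≤ i → i ≤ n → γ n i ∈ Set.Icc (-2 : ℝ) 2)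
    (hγ : ∀ n i, 1 ≤ i → i ≤ n → (∫ t in (γ n i)..2, semicircleDensity t) = (i : ℝ) / n) :
    ∀ᶠ n in atTop, ∀ i, 1 ≤ i → i ≤ n - 1 →
      |γ n i - γ n (i + 1)| ≤ π ^ 2 * (n : ℝ) ^ (-(2 : ℝ) / 3) := by
  filter_upwards [eventually_ge_atTop 1] with n hn
  intro i hi1 hin
  have hiN : i ≤ n := by omega
  have hi1N : i + 1 ≤ n := by omega
  set a := γ n (i + 1) with ha
  set b := γ n i with hb
  obtain ⟨ha2, ha2'⟩ := hγmem n (i+1) (by omega) hi1N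
  obtain ⟨hb2, hb2'⟩ := hγmem n i hi1 hiN
  have hnR : (0:ℝ) < n := by exact_mod_cast hn
  have hsplit : (∫ t in a..b, semicircleDensity t) = 1 / n := by
    have := intervalIntegral.integral_add_adjacent_intervals (a := a) (b := b) (c := 2)
      (semicircleDensity_intble a b) (semicircleDensity_intble b 2)
    rw [hγ n (i+1) (by omega) hi1N, hγ n i hi1 hiN] at this
    push_cast at this
    field_simp at this ⊢
    linarith
  have hab : a ≤ b := by
    by_contra hcon
    push_neg at hcon
    have hle : (∫ t in a..b, semicircleDensity t) ≤ 0 := by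
      rw [intervalIntegral.integral_symm b a]
      have : 0 ≤ ∫ t in b..a, semicircleDensity t :=
        intervalIntegral.integral_nonneg hcon.le (fun u _ => semicircleDensity_nonneg u)
      linarith
    rw [hsplit] at hle
    have : (0:ℝ) < 1 / n := by positivity
    linarith
  have habs : |γ n i - γ n (i + 1)| = b - a := by
    rw [abs_of_nonneg]; linarith
  rw [habs]
  have hfinal : b - a ≤ π ^ 2 / 2 * (n:ℝ) ^ (-(2:ℝ)/3) + π ^ 2 / 2 * (n:ℝ) ^ (-(2:ℝ)/3) := by
    rcases le_or_gt 0 a with h0a | h0a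
    · have := edge_right hn h0a hab hb2' hsplit.le
      have hpos : (0:ℝ) ≤ π ^ 2 / 2 * (n:ℝ) ^ (-(2:ℝ)/3) := by positivity
      linarith
    rcases le_or_gt b 0 with hb0 | hb0
    · have := edge_left hn ha2 hab hb0 hsplit.le
      have hpos : (0:ℝ) ≤ π ^ 2 / 2 * (n:ℝ) ^ (-(2:ℝ)/3) := by positivity
      linarith
    · -- a < 0 < b : split at 0
      have hsum := intervalIntegral.integral_add_adjacent_intervals (a := a) (b := 0) (c := b)
        (semicircleDensity_intble a 0) (semicircleDensity_intble 0 b)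
      have hnn1 : 0 ≤ ∫ t in a..(0:ℝ), semicircleDensity t :=
        intervalIntegral.integral_nonneg h0a.le (fun u _ => semicircleDensity_nonneg u)
      have hnn2 : 0 ≤ ∫ t in (0:ℝ)..b, semicircleDensity t :=
        intervalIntegral.integral_nonneg hb0.le (fun u _ => semicircleDensity_nonneg u)
      have h1 : (∫ t in a..(0:ℝ), semicircleDensity t) ≤ 1 / n := by
        rw [hsplit] at hsum; linarith
      have h2 : (∫ t in (0:ℝ)..b, semicircleDensity t) ≤ 1 / n := by
        rw [hsplit] at hsum; linarith
      have e1 := edge_left hn ha2 h0a.le le_rfl h1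
      have e2 := edge_right hn le_rfl hb0.le hb2' h2
      linarith
  calc b - a ≤ π ^ 2 / 2 * (n:ℝ) ^ (-(2:ℝ)/3) + π ^ 2 / 2 * (n:ℝ) ^ (-(2:ℝ)/3) := hfinal
    _ = π ^ 2 * (n:ℝ) ^ (-(2:ℝ)/3) := by ring
end

section
/- Lemma (D-transform ratio). Let μ be a probability measure on the real line with bounded support contained in [0, ∞), let b = sup{t : t ∈ supp(μ)}, and fix q ∈ (0,1]. Then the map Φ : (b,∞) → ℝ given by Φ(x) = 2·D_μ(x)·φ_μ(x;1)/D_μ'(x) is a continuous, nonincreasing function taking values in [−1, 0]. -/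
/-!
Lemma (D-transform ratio).  Let `μ` be a probability measure on the real line with bounded
support contained in `[0, ∞)`, let `b = sup supp(μ)` and fix `q ∈ (0,1]`.  With
`φ_μ(z; s) = s ∫ z/(z²−t²) dμ(t) + (1−s)/z`,
`φ_μ'(z; s) = −(s ∫ (z²+t²)/(z²−t²)² dμ(t) + (1−s)/z²)`,
`D_μ(z) = φ_μ(z;1) φ_μ(z;q)` and `D_μ'(z) = φ_μ'(z;1) φ_μ(z;q) + φ_μ(z;1) φ_μ'(z;q)`,
the map `Φ : (b,∞) → ℝ`, `Φ(x) = 2 D_μ(x) φ_μ(x;1) / D_μ'(x)` is a continuous nonincreasing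
function taking values in `[−1, 0]`.

The support condition is encoded by: `μ (Set.Iio 0) = 0` and `μ (Set.Ioi b) = 0` (the support
is contained in `[0, b]`), while `μ (Set.Ioc (b−ε) b) > 0` for all `ε > 0` (so `b` is the
supremum of the support).
-/

open MeasureTheory Set

noncomputable def phiT (μ : Measure ℝ) (z s : ℝ) : ℝ :=
  s * ∫ t, z / (z ^ 2 - t ^ 2) ∂μ + (1 - s) / z

noncomputable def phiT' (μ : Measure ℝ) (z s : ℝ) : ℝ :=
  -(s * ∫ t, (z ^ 2 + t ^ 2) / (z ^ 2 - t ^ 2) ^ 2 ∂μ + (1 - s) / z ^ 2)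

noncomputable def DT (μ : Measure ℝ) (q z : ℝ) : ℝ := phiT μ z 1 * phiT μ z q

noncomputable def DT' (μ : Measure ℝ) (q z : ℝ) : ℝ :=
  phiT' μ z 1 * phiT μ z q + phiT μ z 1 * phiT' μ z q

/-! ### Algebraic auxiliary function -/

noncomputable def psiAux (q β ρ : ℝ) : ℝ := β - ρ + (q*β + (1-q)*ρ^2)/(q + (1-q)*ρ)

lemma psiAux_ge_one {q β ρ : ℝ} (hq0 : 0 < q) (hq1 : q ≤ 1) (hb : 1 ≤ β)
    (hr0 : 0 < ρ) (hr1 : ρ ≤ 1) : 1 ≤ psiAux q β ρ := by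
  have hd : 0 < q + (1-q)*ρ := by nlinarith
  rw [psiAux, ← sub_nonneg]
  have e : β - ρ + (q*β + (1-q)*ρ^2)/(q + (1-q)*ρ) - 1
      = ((β - ρ)*(q+(1-q)*ρ) + (q*β + (1-q)*ρ^2) - (q+(1-q)*ρ))/(q+(1-q)*ρ) := by
    rw [eq_div_iff hd.ne']
    linear_combination div_mul_cancel₀ (q*β + (1-q)*ρ^2) hd.ne'
  rw [e]
  apply div_nonneg _ hd.le
  nlinarith [mul_nonneg (sub_nonneg.2 hb) (sub_nonneg.2 hr1), mul_nonneg (sub_nonneg.2 hb) hr0.le]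

lemma psiAux_mono {q β₁ β₂ ρ₁ ρ₂ : ℝ} (hq0 : 0 < q) (hq1 : q ≤ 1) (hb2 : 1 ≤ β₂)
    (hb : β₂ ≤ β₁) (hr1 : 0 < ρ₁) (hr12 : ρ₁ ≤ ρ₂) (hr2 : ρ₂ ≤ 1) :
    psiAux q β₂ ρ₂ ≤ psiAux q β₁ ρ₁ := by
  have hd1 : 0 < q + (1-q)*ρ₁ := by nlinarith
  have hd2 : 0 < q + (1-q)*ρ₂ := by nlinarith
  rw [← sub_nonneg, psiAux, psiAux]
  have e : β₁ - ρ₁ + (q*β₁ + (1-q)*ρ₁^2)/(q + (1-q)*ρ₁)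
      - (β₂ - ρ₂ + (q*β₂ + (1-q)*ρ₂^2)/(q + (1-q)*ρ₂))
      = ((β₁-β₂+ρ₂-ρ₁)*((q+(1-q)*ρ₁)*(q+(1-q)*ρ₂))
        + (q*β₁ + (1-q)*ρ₁^2)*(q+(1-q)*ρ₂) - (q*β₂ + (1-q)*ρ₂^2)*(q+(1-q)*ρ₁))
        /((q+(1-q)*ρ₁)*(q+(1-q)*ρ₂)) := by
    rw [eq_div_iff (mul_pos hd1 hd2).ne']
    have k1 := div_mul_cancel₀ (q*β₁ + (1-q)*ρ₁^2) hd1.ne'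
    have k2 := div_mul_cancel₀ (q*β₂ + (1-q)*ρ₂^2) hd2.ne'
    linear_combination (q+(1-q)*ρ₂) * k1 - (q+(1-q)*ρ₁) * k2
  rw [e]
  apply div_nonneg _ (by positivity)
  nlinarith [mul_nonneg (sub_nonneg.2 hb) hd1.le, mul_nonneg (sub_nonneg.2 hb) hd2.le,
    mul_nonneg (mul_nonneg (sub_nonneg.2 hr12) hq0.le) (sub_nonneg.2 hq1),
    mul_nonneg (mul_nonneg (sub_nonneg.2 hr12) hq0.le) (sub_nonneg.2 hb2),
    mul_nonneg (sub_nonneg.2 hr12) (sub_nonneg.2 hr2),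
    mul_pos hd1 hd2, sq_nonneg (ρ₂ - ρ₁), mul_pos hr1 (lt_of_lt_of_le hr1 hr12)]

/-! ### Integral auxiliary lemmas -/

section IntAux

variable {μ : Measure ℝ} [IsProbabilityMeasure μ]

lemma sq_integral_le' {f : ℝ → ℝ} (hf : Integrable f μ) (hf2 : Integrable (fun t => f t ^ 2) μ) :
    (∫ t, f t ∂μ) ^ 2 ≤ ∫ t, f t ^ 2 ∂μ := by
  set m := ∫ t, f t ∂μ with hm
  have h0 : 0 ≤ ∫ t, (f t - m)^2 ∂μ := integral_nonneg fun t => sq_nonneg _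
  have i1 : Integrable (fun t => f t^2 - 2*m * f t) μ := hf2.sub (hf.const_mul _)
  have e : ∫ t, (f t - m)^2 ∂μ = (∫ t, f t ^2 ∂μ) - m^2 := by
    have e2 : (fun t => (f t - m)^2) = fun t => (f t^2 - 2*m * f t) + m^2 := by
      funext t; ring
    rw [e2, integral_add i1 (integrable_const _), integral_sub hf2 (hf.const_mul _),
      integral_const_mul, integral_const]
    simp [← hm]
    ring
  linarith

omit [IsProbabilityMeasure μ] in
lemma step1' {X : ℝ → ℝ} (hX : Integrable X μ)
    (hphi : Integrable (fun t => X t/(1 - X t)) μ)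
    (hh : Integrable (fun t => X t/(1 - X t)^2) μ)
    (hae : ∀ᵐ t ∂μ, 0 ≤ X t) (hEX : 0 < ∫ t, X t ∂μ) :
    (∫ t, X t/(1 - X t) ∂μ)^2 ≤ (∫ t, X t/(1 - X t)^2 ∂μ) * ∫ t, X t ∂μ := by
  set c1 := ∫ t, X t ∂μ with hc1
  set c2 := ∫ t, X t/(1 - X t) ∂μ with hc2
  have h0 : 0 ≤ ∫ t, X t * (c1 * (1/(1 - X t)) - c2)^2 ∂μ := by
    apply integral_nonneg_of_ae
    filter_upwards [hae] with t ht
    positivity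
  have e : ∀ t : ℝ, X t * (c1 * (1/(1 - X t)) - c2)^2
      = (c1^2 * (X t/(1 - X t)^2) - 2*c1*c2 * (X t/(1 - X t))) + c2^2 * X t := by
    intro t
    by_cases h : (1 : ℝ) - X t = 0
    · rw [h]; simp; ring
    · field_simp; ring
  rw [integral_congr_ae (Filter.Eventually.of_forall e)] at h0
  have i1 : Integrable (fun t => c1^2 * (X t/(1 - X t)^2) - 2*c1*c2 * (X t/(1 - X t))) μ :=
    (hh.const_mul _).sub (hphi.const_mul _)
  rw [integral_add i1 (hX.const_mul _), integral_sub (hh.const_mul _) (hphi.const_mul _),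
    integral_const_mul, integral_const_mul, integral_const_mul, ← hc1, ← hc2] at h0
  nlinarith [hEX, sq_nonneg c2]

omit [IsProbabilityMeasure μ] in
/-- Chebyshev-type product inequality via Fubini. -/
lemma step2' [SFinite μ] {P Q R S : ℝ → ℝ} {s : Set ℝ} (hμs : μ sᶜ = 0)
    (hP : Integrable P μ) (hQ : Integrable Q μ) (hR : Integrable R μ) (hS : Integrable S μ)
    (hpt : ∀ t₁ ∈ s, ∀ t₂ ∈ s, P t₁ * Q t₂ + P t₂ * Q t₁ ≤ R t₁ * S t₂ + R t₂ * S t₁) :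
    (∫ t, P t ∂μ) * ∫ t, Q t ∂μ ≤ (∫ t, R t ∂μ) * ∫ t, S t ∂μ := by
  have h1 : (μ.prod μ) (sᶜ ×ˢ (univ : Set ℝ)) = 0 := by
    rw [Measure.prod_prod, hμs, zero_mul]
  have h2 : (μ.prod μ) ((univ : Set ℝ) ×ˢ sᶜ) = 0 := by
    rw [Measure.prod_prod, hμs, mul_zero]
  have hprod : (μ.prod μ) ((s ×ˢ s : Set (ℝ × ℝ))ᶜ) = 0 := by
    refine measure_mono_null ?_ (measure_union_null h1 h2)
    intro p hp
    simp only [mem_compl_iff, mem_prod, not_and_or] at hp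
    rcases hp with h | h
    · exact Or.inl ⟨h, mem_univ _⟩
    · exact Or.inr ⟨mem_univ _, h⟩
  have hae : ∀ᵐ p ∂(μ.prod μ), p ∈ (s ×ˢ s : Set (ℝ × ℝ)) := by
    rw [ae_iff]; exact hprod
  have iRS : Integrable (fun p : ℝ × ℝ => R p.1 * S p.2) (μ.prod μ) := hR.mul_prod hS
  have iSR : Integrable (fun p : ℝ × ℝ => S p.1 * R p.2) (μ.prod μ) := hS.mul_prod hR
  have iPQ : Integrable (fun p : ℝ × ℝ => P p.1 * Q p.2) (μ.prod μ) := hP.mul_prod hQ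
  have iQP : Integrable (fun p : ℝ × ℝ => Q p.1 * P p.2) (μ.prod μ) := hQ.mul_prod hP
  have key : 0 ≤ ∫ p : ℝ × ℝ, ((R p.1 * S p.2 + S p.1 * R p.2)
      - (P p.1 * Q p.2 + Q p.1 * P p.2)) ∂(μ.prod μ) := by
    apply integral_nonneg_of_ae
    filter_upwards [hae] with p hp
    have h := hpt p.1 hp.1 p.2 hp.2
    have e1 : Q p.1 * P p.2 = P p.2 * Q p.1 := mul_comm _ _
    have e2 : S p.1 * R p.2 = R p.2 * S p.1 := mul_comm _ _
    simp only [Pi.zero_apply]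
    linarith [h, e1, e2]
  have iA : Integrable (fun p : ℝ × ℝ => R p.1 * S p.2 + S p.1 * R p.2) (μ.prod μ) := iRS.add iSR
  have iB : Integrable (fun p : ℝ × ℝ => P p.1 * Q p.2 + Q p.1 * P p.2) (μ.prod μ) := iPQ.add iQP
  rw [integral_sub iA iB, integral_add iRS iSR, integral_add iPQ iQP,
    integral_prod_mul, integral_prod_mul, integral_prod_mul, integral_prod_mul] at key
  nlinarith [key]

end IntAux
section Main

variable {μ : Measure ℝ} [IsProbabilityMeasure μ] {b : ℝ}

lemma meas_one (z : ℝ) : AEStronglyMeasurable (fun t : ℝ => 1/(z^2 - t^2)) μ := by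
  apply Measurable.aestronglyMeasurable
  fun_prop

lemma meas_two (z : ℝ) : AEStronglyMeasurable (fun t : ℝ => 1/(z^2 - t^2)^2) μ := by
  apply Measurable.aestronglyMeasurable
  fun_prop

lemma sq_le_sq_of_Icc {t : ℝ} (ht : t ∈ Icc 0 b) : t^2 ≤ b^2 := by
  nlinarith [ht.1, ht.2]

lemma int_one (hsupp : ∀ᵐ t ∂μ, t ∈ Icc (0:ℝ) b) {z : ℝ} (hb0 : 0 ≤ b) (hz : b < z) :
    Integrable (fun t : ℝ => 1/(z^2 - t^2)) μ := by
  have hd0 : 0 < z^2 - b^2 := by nlinarith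
  refine (integrable_const (1/(z^2 - b^2))).mono' (meas_one z) ?_
  filter_upwards [hsupp] with t ht
  have h1 : t^2 ≤ b^2 := sq_le_sq_of_Icc ht
  have h2 : 0 < z^2 - t^2 := by nlinarith
  rw [Real.norm_eq_abs, abs_of_pos (by positivity)]
  exact one_div_le_one_div_of_le hd0 (by nlinarith)

lemma int_two (hsupp : ∀ᵐ t ∂μ, t ∈ Icc (0:ℝ) b) {z : ℝ} (hb0 : 0 ≤ b) (hz : b < z) :
    Integrable (fun t : ℝ => 1/(z^2 - t^2)^2) μ := by
  have hd0 : 0 < z^2 - b^2 := by nlinarith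
  refine (integrable_const (1/(z^2 - b^2)^2)).mono' (meas_two z) ?_
  filter_upwards [hsupp] with t ht
  have h1 : t^2 ≤ b^2 := sq_le_sq_of_Icc ht
  have h2 : 0 < z^2 - t^2 := by nlinarith
  rw [Real.norm_eq_abs, abs_of_pos (by positivity)]
  exact one_div_le_one_div_of_le (by positivity) (by nlinarith)

lemma J1_lb (hsupp : ∀ᵐ t ∂μ, t ∈ Icc (0:ℝ) b) {z : ℝ} (hb0 : 0 ≤ b) (hz : b < z) :
    1 ≤ z^2 * ∫ t, 1/(z^2 - t^2) ∂μ := by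
  have hz0 : 0 < z := lt_of_le_of_lt hb0 hz
  have h : ∫ (_ : ℝ), 1/z^2 ∂μ ≤ ∫ t, 1/(z^2 - t^2) ∂μ := by
    refine integral_mono_ae (integrable_const _) (int_one hsupp hb0 hz) ?_
    filter_upwards [hsupp] with t ht
    have h1 : t^2 ≤ b^2 := sq_le_sq_of_Icc ht
    have h2 : 0 < z^2 - t^2 := by nlinarith
    exact one_div_le_one_div_of_le h2 (by nlinarith)
  rw [integral_const] at h
  simp at h
  calc (1:ℝ) = z^2 * (1/z^2) := by field_simp
  _ ≤ z^2 * ∫ t, 1/(z^2 - t^2) ∂μ := by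
      apply mul_le_mul_of_nonneg_left _ (by positivity)
      simpa using h

lemma J1_pos (hsupp : ∀ᵐ t ∂μ, t ∈ Icc (0:ℝ) b) {z : ℝ} (hb0 : 0 ≤ b) (hz : b < z) :
    0 < ∫ t, 1/(z^2 - t^2) ∂μ := by
  have hz0 : 0 < z := lt_of_le_of_lt hb0 hz
  have h := J1_lb hsupp hb0 hz
  nlinarith [sq_nonneg z]

lemma J_CS (hsupp : ∀ᵐ t ∂μ, t ∈ Icc (0:ℝ) b) {z : ℝ} (hb0 : 0 ≤ b) (hz : b < z) :
    (∫ t, 1/(z^2 - t^2) ∂μ)^2 ≤ ∫ t, 1/(z^2 - t^2)^2 ∂μ := by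
  have h := sq_integral_le' (μ := μ) (f := fun t => 1/(z^2 - t^2)) (int_one hsupp hb0 hz) ?_
  · calc (∫ t, 1/(z^2 - t^2) ∂μ)^2 ≤ ∫ t, (1/(z^2 - t^2))^2 ∂μ := h
    _ = ∫ t, 1/(z^2 - t^2)^2 ∂μ := by
        apply integral_congr_ae (Filter.Eventually.of_forall fun t => ?_)
        show (1/(z^2 - t^2))^2 = 1/(z^2 - t^2)^2
        rw [div_pow, one_pow]
  · apply (int_two hsupp hb0 hz).congr
    apply Filter.Eventually.of_forall fun t => ?_
    show 1/(z^2 - t^2)^2 = (1/(z^2 - t^2))^2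
    rw [div_pow, one_pow]

lemma J1_mono (hsupp : ∀ᵐ t ∂μ, t ∈ Icc (0:ℝ) b) {x y : ℝ} (hb0 : 0 ≤ b) (hx : b < x)
    (hxy : x ≤ y) :
    y^2 * ∫ t, 1/(y^2 - t^2) ∂μ ≤ x^2 * ∫ t, 1/(x^2 - t^2) ∂μ := by
  have hy : b < y := lt_of_lt_of_le hx hxy
  rw [← integral_const_mul, ← integral_const_mul]
  refine integral_mono_ae ((int_one hsupp hb0 hy).const_mul _)
    ((int_one hsupp hb0 hx).const_mul _) ?_
  filter_upwards [hsupp] with t ht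
  have h1 : t^2 ≤ b^2 := sq_le_sq_of_Icc ht
  have hx2 : 0 < x^2 - t^2 := by nlinarith
  have hy2 : 0 < y^2 - t^2 := by nlinarith
  have hx0 : (0:ℝ) ≤ x := le_trans hb0 hx.le
  rw [mul_one_div, mul_one_div, div_le_div_iff₀ hy2 hx2]
  nlinarith [mul_nonneg (sq_nonneg t) (sub_nonneg.2 (by nlinarith : x^2 ≤ y^2))]

end Main
section MainB

variable {μ : Measure ℝ} [IsProbabilityMeasure μ] {b : ℝ}

lemma cheb_pointwise {u v : ℝ} (hu0 : 0 < u) (hv0 : 0 < v) (hu2 : 0 < 1 - u)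
    (hv2 : 0 < 1 - v) :
    0 ≤ u^2/(1 - u)^2 * v + v^2/(1 - v)^2 * u - (u/(1 - u)^2 * v^2 + v/(1 - v)^2 * u^2) := by
  have e : u^2/(1 - u)^2 * v + v^2/(1 - v)^2 * u - (u/(1 - u)^2 * v^2 + v/(1 - v)^2 * u^2)
      = u*v*(u - v)^2*(2 - u - v)/((1 - u)^2*(1 - v)^2) := by
    field_simp
    ring
  rw [e]
  apply div_nonneg _ (by positivity)
  have h2uv : 0 ≤ 2 - u - v := by linarith
  positivity

set_option maxHeartbeats 1000000 in
lemma J_M2 (hsupp : ∀ᵐ t ∂μ, t ∈ Icc (0:ℝ) b) {x y : ℝ} (hb0 : 0 ≤ b) (hx : b < x)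
    (hxy : x ≤ y) :
    (∫ t, 1/(y^2 - t^2)^2 ∂μ) * (∫ t, 1/(x^2 - t^2) ∂μ)^2
      ≤ (∫ t, 1/(x^2 - t^2)^2 ∂μ) * (∫ t, 1/(y^2 - t^2) ∂μ)^2 := by
  rcases eq_or_lt_of_le hxy with rfl | hlt
  · exact le_rfl
  have hy : b < y := lt_trans hx hlt
  have hx0 : 0 < x := lt_of_le_of_lt hb0 hx
  have hy0 : 0 < y := lt_trans hx0 hlt
  have hc : 0 < y^2 - x^2 := by
    have e : y^2 - x^2 = (y-x)*(y+x) := by ring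
    rw [e]; exact mul_pos (sub_pos.2 hlt) (by linarith)
  set c := y^2 - x^2 with hcdef
  set X : ℝ → ℝ := fun t => c/(y^2 - t^2) with hXdef
  clear_value c
  have hdb : 0 < y^2 - b^2 := by nlinarith
  have hdbx : 0 < x^2 - b^2 := by nlinarith
  -- pointwise facts on the support
  have hptX : ∀ t ∈ Icc (0:ℝ) b, 0 < y^2 - t^2 ∧ 0 < x^2 - t^2 ∧ 0 < X t
      ∧ X t ≤ c/(y^2 - b^2) ∧ (x^2 - b^2)/y^2 ≤ 1 - X t ∧ X t < 1
      ∧ 1 - X t = (x^2 - t^2)/(y^2 - t^2) := by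
    intro t ht
    have h1 : t^2 ≤ b^2 := sq_le_sq_of_Icc ht
    have h2 : 0 < y^2 - t^2 := by nlinarith
    have h3 : 0 < x^2 - t^2 := by nlinarith
    have hXt : X t = c/(y^2 - t^2) := by rw [hXdef]
    have h4 : 0 < X t := by rw [hXt]; positivity
    have h5 : X t ≤ c/(y^2 - b^2) := by
      rw [hXt]
      apply div_le_div_of_nonneg_left hc.le hdb (by nlinarith)
    have e : 1 - X t = (x^2 - t^2)/(y^2 - t^2) := by
      rw [hXt, eq_div_iff h2.ne', sub_mul, one_mul, div_mul_cancel₀ _ h2.ne', hcdef]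
      ring
    have h6 : (x^2 - b^2)/y^2 ≤ 1 - X t := by
      rw [e, div_le_div_iff₀ (by positivity) h2]
      nlinarith [sq_nonneg t]
    have h7 : X t < 1 := by
      rw [hXt, div_lt_one h2]
      nlinarith
    exact ⟨h2, h3, h4, h5, h6, h7, e⟩
  -- measurability
  have mX : Measurable X := by rw [hXdef]; fun_prop
  have m1 : AEStronglyMeasurable X μ := mX.aestronglyMeasurable
  have m2 : AEStronglyMeasurable (fun t => X t^2) μ := (mX.pow_const 2).aestronglyMeasurable
  have m3 : AEStronglyMeasurable (fun t => X t/(1 - X t)) μ :=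
    (mX.div ((measurable_const.sub mX))).aestronglyMeasurable
  have m4 : AEStronglyMeasurable (fun t => X t/(1 - X t)^2) μ :=
    (mX.div (((measurable_const.sub mX)).pow_const 2)).aestronglyMeasurable
  have m5 : AEStronglyMeasurable (fun t => X t^2/(1 - X t)^2) μ :=
    ((mX.pow_const 2).div (((measurable_const.sub mX)).pow_const 2)).aestronglyMeasurable
  set MX := c/(y^2 - b^2) with hMX
  set eps := (x^2 - b^2)/y^2 with heps
  have heps0 : 0 < eps := by rw [heps]; positivity
  have hMX0 : 0 < MX := by rw [hMX]; positivity
  have iX : Integrable X μ := by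
    refine (integrable_const MX).mono' m1 ?_
    filter_upwards [hsupp] with t ht
    obtain ⟨h2, h3, h4, h5, h6, h7, e⟩ := hptX t ht
    rw [Real.norm_eq_abs, abs_of_pos h4]; exact h5
  have iX2 : Integrable (fun t => X t^2) μ := by
    refine (integrable_const (MX^2)).mono' m2 ?_
    filter_upwards [hsupp] with t ht
    obtain ⟨h2, h3, h4, h5, h6, h7, e⟩ := hptX t ht
    rw [Real.norm_eq_abs, abs_of_pos (by positivity)]
    exact pow_le_pow_left₀ h4.le h5 2
  have iphi : Integrable (fun t => X t/(1 - X t)) μ := by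
    refine (integrable_const (MX/eps)).mono' m3 ?_
    filter_upwards [hsupp] with t ht
    obtain ⟨h2, h3, h4, h5, h6, h7, e⟩ := hptX t ht
    have h8 : 0 < 1 - X t := lt_of_lt_of_le heps0 h6
    rw [Real.norm_eq_abs, abs_of_pos (div_pos h4 h8)]
    exact div_le_div₀ hMX0.le h5 heps0 h6
  have ih : Integrable (fun t => X t/(1 - X t)^2) μ := by
    refine (integrable_const (MX/eps^2)).mono' m4 ?_
    filter_upwards [hsupp] with t ht
    obtain ⟨h2, h3, h4, h5, h6, h7, e⟩ := hptX t ht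
    have h8 : 0 < 1 - X t := lt_of_lt_of_le heps0 h6
    rw [Real.norm_eq_abs, abs_of_pos (div_pos h4 (by positivity))]
    exact div_le_div₀ hMX0.le h5 (by positivity) (pow_le_pow_left₀ heps0.le h6 2)
  have iR : Integrable (fun t => X t^2/(1 - X t)^2) μ := by
    refine (integrable_const (MX^2/eps^2)).mono' m5 ?_
    filter_upwards [hsupp] with t ht
    obtain ⟨h2, h3, h4, h5, h6, h7, e⟩ := hptX t ht
    have h8 : 0 < 1 - X t := lt_of_lt_of_le heps0 h6
    rw [Real.norm_eq_abs, abs_of_pos (div_pos (by positivity) (by positivity))]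
    exact div_le_div₀ (by positivity) (pow_le_pow_left₀ h4.le h5 2) (by positivity)
      (pow_le_pow_left₀ heps0.le h6 2)
  have hEX : 0 < ∫ t, X t ∂μ := by
    have h : ∫ (_ : ℝ), c/y^2 ∂μ ≤ ∫ t, X t ∂μ := by
      refine integral_mono_ae (integrable_const _) iX ?_
      filter_upwards [hsupp] with t ht
      obtain ⟨h2, h3, h4, h5, h6, h7, e⟩ := hptX t ht
      have hXt : X t = c/(y^2 - t^2) := by rw [hXdef]
      rw [hXt]
      apply div_le_div_of_nonneg_left hc.le h2 (by nlinarith [sq_le_sq_of_Icc ht])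
    rw [integral_const] at h
    simp at h
    have hcy : (0:ℝ) < c/y^2 := by positivity
    linarith
  have haeX : ∀ᵐ t ∂μ, 0 ≤ X t := by
    filter_upwards [hsupp] with t ht
    exact (hptX t ht).2.2.1.le
  have hstep1 : (∫ t, X t/(1 - X t) ∂μ)^2
      ≤ (∫ t, X t/(1 - X t)^2 ∂μ) * ∫ t, X t ∂μ := step1' iX iphi ih haeX hEX
  have hstep2 : (∫ t, X t/(1 - X t)^2 ∂μ) * ∫ t, X t^2 ∂μ
      ≤ (∫ t, X t^2/(1 - X t)^2 ∂μ) * ∫ t, X t ∂μ := by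
    have hμs : μ (Icc (0:ℝ) b)ᶜ = 0 := by
      have h := hsupp; rw [ae_iff] at h; exact h
    refine step2' hμs ih iX2 iR iX ?_
    intro t₁ ht₁ t₂ ht₂
    obtain ⟨_, _, hu0, _, hu6, hu1, _⟩ := hptX t₁ ht₁
    obtain ⟨_, _, hv0, _, hv6, hv1, _⟩ := hptX t₂ ht₂
    have hu2 : 0 < 1 - X t₁ := lt_of_lt_of_le heps0 hu6
    have hv2 : 0 < 1 - X t₂ := lt_of_lt_of_le heps0 hv6
    rw [← sub_nonneg]
    exact cheb_pointwise hu0 hv0 hu2 hv2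
  have hEX2 : 0 ≤ ∫ t, X t^2 ∂μ := integral_nonneg fun t => sq_nonneg _
  have key : (∫ t, X t^2 ∂μ) * (∫ t, X t/(1 - X t) ∂μ)^2
      ≤ (∫ t, X t^2/(1 - X t)^2 ∂μ) * (∫ t, X t ∂μ)^2 := by
    calc (∫ t, X t^2 ∂μ) * (∫ t, X t/(1 - X t) ∂μ)^2
        ≤ (∫ t, X t^2 ∂μ) * ((∫ t, X t/(1 - X t)^2 ∂μ) * ∫ t, X t ∂μ) :=
          mul_le_mul_of_nonneg_left hstep1 hEX2
      _ = ((∫ t, X t/(1 - X t)^2 ∂μ) * ∫ t, X t^2 ∂μ) * ∫ t, X t ∂μ := by ring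
      _ ≤ ((∫ t, X t^2/(1 - X t)^2 ∂μ) * ∫ t, X t ∂μ) * ∫ t, X t ∂μ :=
          mul_le_mul_of_nonneg_right hstep2 hEX.le
      _ = (∫ t, X t^2/(1 - X t)^2 ∂μ) * (∫ t, X t ∂μ)^2 := by ring
  have hJ1y : ∫ t, 1/(y^2 - t^2) ∂μ = (1/c) * ∫ t, X t ∂μ := by
    rw [← integral_const_mul]
    refine integral_congr_ae ?_
    filter_upwards [hsupp] with t ht
    obtain ⟨h2, h3, h4, h5, h6, h7, e⟩ := hptX t ht
    have hXt : X t = c/(y^2 - t^2) := by rw [hXdef]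
    show 1/(y^2 - t^2) = 1/c * X t
    rw [hXt]
    field_simp
  have hJ2y : ∫ t, 1/(y^2 - t^2)^2 ∂μ = (1/c^2) * ∫ t, X t^2 ∂μ := by
    rw [← integral_const_mul]
    refine integral_congr_ae ?_
    filter_upwards [hsupp] with t ht
    obtain ⟨h2, h3, h4, h5, h6, h7, e⟩ := hptX t ht
    have hXt : X t = c/(y^2 - t^2) := by rw [hXdef]
    show 1/(y^2 - t^2)^2 = 1/c^2 * X t^2
    rw [hXt, div_pow]
    field_simp
  have hJ1x : ∫ t, 1/(x^2 - t^2) ∂μ = (1/c) * ∫ t, X t/(1 - X t) ∂μ := by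
    rw [← integral_const_mul]
    refine integral_congr_ae ?_
    filter_upwards [hsupp] with t ht
    obtain ⟨h2, h3, h4, h5, h6, h7, e⟩ := hptX t ht
    have hXt : X t = c/(y^2 - t^2) := by rw [hXdef]
    show 1/(x^2 - t^2) = 1/c * (X t/(1 - X t))
    rw [e, hXt]
    rw [div_div_div_cancel_right₀]
    · field_simp
    · exact h2.ne'
  have hJ2x : ∫ t, 1/(x^2 - t^2)^2 ∂μ = (1/c^2) * ∫ t, X t^2/(1 - X t)^2 ∂μ := by
    rw [← integral_const_mul]
    refine integral_congr_ae ?_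
    filter_upwards [hsupp] with t ht
    obtain ⟨h2, h3, h4, h5, h6, h7, e⟩ := hptX t ht
    have hXt : X t = c/(y^2 - t^2) := by rw [hXdef]
    show 1/(x^2 - t^2)^2 = 1/c^2 * (X t^2/(1 - X t)^2)
    rw [e, hXt]
    rw [div_pow, div_pow, div_div_div_cancel_right₀]
    · field_simp
    · exact (pow_ne_zero 2 h2.ne')
  rw [hJ1y, hJ2y, hJ1x, hJ2x]
  have h := mul_le_mul_of_nonneg_left key (show (0:ℝ) ≤ 1/c^4 by positivity)
  calc (1/c^2 * ∫ t, X t^2 ∂μ) * ((1/c) * ∫ t, X t/(1 - X t) ∂μ)^2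
      = 1/c^4 * ((∫ t, X t^2 ∂μ) * (∫ t, X t/(1 - X t) ∂μ)^2) := by ring
    _ ≤ 1/c^4 * ((∫ t, X t^2/(1 - X t)^2 ∂μ) * (∫ t, X t ∂μ)^2) := h
    _ = (1/c^2 * ∫ t, X t^2/(1 - X t)^2 ∂μ) * ((1/c) * ∫ t, X t ∂μ)^2 := by ring

end MainB
section MainC

variable {μ : Measure ℝ} [IsProbabilityMeasure μ] {b : ℝ}

noncomputable def Kfun (μ : Measure ℝ) (q z : ℝ) : ℝ :=
  psiAux q ((∫ t, 1/(z^2 - t^2)^2 ∂μ)/(∫ t, 1/(z^2 - t^2) ∂μ)^2)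
    (1/(z^2 * ∫ t, 1/(z^2 - t^2) ∂μ))

lemma K_ge_one (hsupp : ∀ᵐ t ∂μ, t ∈ Icc (0:ℝ) b) {q z : ℝ} (hb0 : 0 ≤ b)
    (hq0 : 0 < q) (hq1 : q ≤ 1) (hz : b < z) : 1 ≤ Kfun μ q z := by
  have hz0 : 0 < z := lt_of_le_of_lt hb0 hz
  have ha := J1_pos hsupp hb0 hz
  have hlb := J1_lb hsupp hb0 hz
  have hcs := J_CS hsupp hb0 hz
  have hza : 0 < z^2 * ∫ t, 1/(z^2 - t^2) ∂μ := mul_pos (by positivity) ha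
  refine psiAux_ge_one hq0 hq1 ?_ ?_ ?_
  · exact (one_le_div (by positivity)).2 hcs
  · positivity
  · exact (div_le_one hza).2 hlb

lemma K_anti (hsupp : ∀ᵐ t ∂μ, t ∈ Icc (0:ℝ) b) {q x y : ℝ} (hb0 : 0 ≤ b)
    (hq0 : 0 < q) (hq1 : q ≤ 1) (hx : b < x) (hxy : x ≤ y) : Kfun μ q y ≤ Kfun μ q x := by
  have hy : b < y := lt_of_lt_of_le hx hxy
  have hx0 : 0 < x := lt_of_le_of_lt hb0 hx
  have hy0 : 0 < y := lt_of_le_of_lt hb0 hy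
  have hax := J1_pos hsupp hb0 hx
  have hay := J1_pos hsupp hb0 hy
  have hlbx := J1_lb hsupp hb0 hx
  have hlby := J1_lb hsupp hb0 hy
  have hcsy := J_CS hsupp hb0 hy
  have hzax : 0 < x^2 * ∫ t, 1/(x^2 - t^2) ∂μ := mul_pos (by positivity) hax
  have hzay : 0 < y^2 * ∫ t, 1/(y^2 - t^2) ∂μ := mul_pos (by positivity) hay
  refine psiAux_mono hq0 hq1 ?_ ?_ ?_ ?_ ?_
  · exact (one_le_div (by positivity)).2 hcsy
  · rw [div_le_div_iff₀ (by positivity) (by positivity)]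
    exact J_M2 hsupp hb0 hx hxy
  · positivity
  · exact one_div_le_one_div_of_le hzay (J1_mono hsupp hb0 hx hxy)
  · exact (div_le_one hzay).2 hlby

lemma intA_eq {z : ℝ} : ∫ t, z/(z^2 - t^2) ∂μ = z * ∫ t, 1/(z^2 - t^2) ∂μ := by
  rw [← integral_const_mul]
  exact integral_congr_ae (Filter.Eventually.of_forall fun t => (mul_one_div z _).symm)

lemma intB_eq (hsupp : ∀ᵐ t ∂μ, t ∈ Icc (0:ℝ) b) {z : ℝ} (hb0 : 0 ≤ b) (hz : b < z) :
    ∫ t, (z^2 + t^2)/(z^2 - t^2)^2 ∂μ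
      = 2*z^2*(∫ t, 1/(z^2 - t^2)^2 ∂μ) - ∫ t, 1/(z^2 - t^2) ∂μ := by
  have e : ∀ᵐ t ∂μ, (z^2 + t^2)/(z^2 - t^2)^2
      = 2*z^2*(1/(z^2 - t^2)^2) - 1/(z^2 - t^2) := by
    filter_upwards [hsupp] with t ht
    have h1 : t^2 ≤ b^2 := sq_le_sq_of_Icc ht
    have h2 : 0 < z^2 - t^2 := by nlinarith
    field_simp
    ring
  rw [integral_congr_ae e,
    integral_sub ((int_two hsupp hb0 hz).const_mul _) (int_one hsupp hb0 hz),
    integral_const_mul]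

lemma phiT_one_eq {z : ℝ} : phiT μ z 1 = z * ∫ t, 1/(z^2 - t^2) ∂μ := by
  rw [phiT, intA_eq]; norm_num

lemma phiT_q_eq {q z : ℝ} :
    phiT μ z q = q * (z * ∫ t, 1/(z^2 - t^2) ∂μ) + (1-q)/z := by
  rw [phiT, intA_eq]

lemma phiT'_one_eq (hsupp : ∀ᵐ t ∂μ, t ∈ Icc (0:ℝ) b) {z : ℝ} (hb0 : 0 ≤ b) (hz : b < z) :
    phiT' μ z 1 = -(2*z^2*(∫ t, 1/(z^2 - t^2)^2 ∂μ) - ∫ t, 1/(z^2 - t^2) ∂μ) := by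
  rw [phiT', intB_eq hsupp hb0 hz]; norm_num

lemma phiT'_q_eq (hsupp : ∀ᵐ t ∂μ, t ∈ Icc (0:ℝ) b) {q z : ℝ} (hb0 : 0 ≤ b) (hz : b < z) :
    phiT' μ z q = -(q * (2*z^2*(∫ t, 1/(z^2 - t^2)^2 ∂μ) - ∫ t, 1/(z^2 - t^2) ∂μ)
      + (1-q)/z^2) := by
  rw [phiT', intB_eq hsupp hb0 hz]

lemma Bpos (hsupp : ∀ᵐ t ∂μ, t ∈ Icc (0:ℝ) b) {z : ℝ} (hb0 : 0 ≤ b) (hz : b < z) :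
    0 < 2*z^2*(∫ t, 1/(z^2 - t^2)^2 ∂μ) - ∫ t, 1/(z^2 - t^2) ∂μ := by
  have ha := J1_pos hsupp hb0 hz
  have hlb := J1_lb hsupp hb0 hz
  have hcs := J_CS hsupp hb0 hz
  have hz0 : 0 < z := lt_of_le_of_lt hb0 hz
  nlinarith [mul_le_mul_of_nonneg_left hlb (le_of_lt ha),
    mul_le_mul_of_nonneg_left hcs (by positivity : (0:ℝ) ≤ 2*z^2)]

lemma phiT_q_pos (hsupp : ∀ᵐ t ∂μ, t ∈ Icc (0:ℝ) b) {q z : ℝ} (hb0 : 0 ≤ b)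
    (hq0 : 0 < q) (hq1 : q ≤ 1) (hz : b < z) : 0 < phiT μ z q := by
  have ha := J1_pos hsupp hb0 hz
  have hz0 : 0 < z := lt_of_le_of_lt hb0 hz
  rw [phiT_q_eq]
  have h1 : 0 < q * (z * ∫ t, 1/(z^2 - t^2) ∂μ) := mul_pos hq0 (mul_pos hz0 ha)
  have h2 : 0 ≤ (1-q)/z := div_nonneg (by linarith) hz0.le
  linarith

lemma phiT_one_pos (hsupp : ∀ᵐ t ∂μ, t ∈ Icc (0:ℝ) b) {z : ℝ} (hb0 : 0 ≤ b)
    (hz : b < z) : 0 < phiT μ z 1 := by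
  have ha := J1_pos hsupp hb0 hz
  have hz0 : 0 < z := lt_of_le_of_lt hb0 hz
  rw [phiT_one_eq]
  exact mul_pos hz0 ha

lemma DT'_neg (hsupp : ∀ᵐ t ∂μ, t ∈ Icc (0:ℝ) b) {q z : ℝ} (hb0 : 0 ≤ b)
    (hq0 : 0 < q) (hq1 : q ≤ 1) (hz : b < z) : DT' μ q z < 0 := by
  have hz0 : 0 < z := lt_of_le_of_lt hb0 hz
  have hB := Bpos hsupp hb0 hz
  have hq := phiT_q_pos hsupp hb0 hq0 hq1 hz
  have h1 := phiT_one_pos hsupp hb0 hz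
  rw [DT', phiT'_one_eq hsupp hb0 hz, phiT'_q_eq hsupp hb0 hz]
  have ha := J1_pos hsupp hb0 hz
  have h2 : 0 < q * (2*z^2*(∫ t, 1/(z^2 - t^2)^2 ∂μ) - ∫ t, 1/(z^2 - t^2) ∂μ) + (1-q)/z^2 := by
    have := div_nonneg (by linarith : (0:ℝ) ≤ 1-q) (by positivity : (0:ℝ) ≤ z^2)
    nlinarith [mul_pos hq0 hB]
  nlinarith [mul_pos hB hq, mul_pos h1 h2]

lemma DT_pos (hsupp : ∀ᵐ t ∂μ, t ∈ Icc (0:ℝ) b) {q z : ℝ} (hb0 : 0 ≤ b)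
    (hq0 : 0 < q) (hq1 : q ≤ 1) (hz : b < z) : 0 < DT μ q z :=
  mul_pos (phiT_one_pos hsupp hb0 hz) (phiT_q_pos hsupp hb0 hq0 hq1 hz)

set_option maxHeartbeats 1000000 in
lemma NK_eq (hsupp : ∀ᵐ t ∂μ, t ∈ Icc (0:ℝ) b) {q z : ℝ} (hb0 : 0 ≤ b)
    (hq0 : 0 < q) (hq1 : q ≤ 1) (hz : b < z) :
    (2 * DT μ q z * phiT μ z 1) * Kfun μ q z = -DT' μ q z := by
  have hz0 : 0 < z := lt_of_le_of_lt hb0 hz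
  have ha := J1_pos hsupp hb0 hz
  rw [DT, DT', Kfun, psiAux, phiT_one_eq, phiT_q_eq, phiT'_one_eq hsupp hb0 hz,
    phiT'_q_eq hsupp hb0 hz]
  set a := ∫ t, 1/(z^2 - t^2) ∂μ with hadef
  set c2 := ∫ t, 1/(z^2 - t^2)^2 ∂μ with hc2def
  clear_value a c2
  have hza : (0:ℝ) < z^2*a := by positivity
  have hden : q + (1-q)*(1/(z^2 * a)) = (q*(z^2*a) + (1-q))/(z^2*a) := by
    field_simp
  have hnum : (0:ℝ) < q*(z^2*a) + (1-q) := by nlinarith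
  rw [hden]
  generalize hN : q*(z^2*a) + (1-q) = N at hnum ⊢
  field_simp [hnum.ne']
  subst hN
  ring
end MainC
section MainD

variable {μ : Measure ℝ} [IsProbabilityMeasure μ] {b : ℝ}

lemma Phi_eq (hsupp : ∀ᵐ t ∂μ, t ∈ Icc (0:ℝ) b) {q z : ℝ} (hb0 : 0 ≤ b)
    (hq0 : 0 < q) (hq1 : q ≤ 1) (hz : b < z) :
    2 * DT μ q z * phiT μ z 1 / DT' μ q z = -(1/Kfun μ q z) := by
  have hN : 0 < 2 * DT μ q z * phiT μ z 1 :=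
    mul_pos (mul_pos two_pos (DT_pos hsupp hb0 hq0 hq1 hz)) (phiT_one_pos hsupp hb0 hz)
  have hNK := NK_eq hsupp hb0 hq0 hq1 hz
  have hD' : DT' μ q z = -(2 * DT μ q z * phiT μ z 1 * Kfun μ q z) := by linarith
  rw [hD', div_neg, div_mul_cancel_left₀ (ne_of_gt hN), one_div]

lemma contA (hsupp : ∀ᵐ t ∂μ, t ∈ Icc (0:ℝ) b) (hb0 : 0 ≤ b) :
    ContinuousOn (fun z => ∫ t, z/(z^2 - t^2) ∂μ) (Ioi b) := by
  intro z₀ hz₀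
  apply ContinuousAt.continuousWithinAt
  rw [mem_Ioi] at hz₀
  set m := (z₀ + b)/2 with hm
  set M := z₀ + 1 with hM
  have hbm : b < m := by rw [hm]; linarith
  have hmz : m < z₀ := by rw [hm]; linarith
  have hzM : z₀ < M := by rw [hM]; linarith
  have hm0 : 0 < m := lt_of_le_of_lt hb0 hbm
  have hmb : 0 < m^2 - b^2 := by nlinarith
  have hM0 : 0 < M := by linarith
  apply continuousAt_of_dominated (bound := fun _ => M/(m^2 - b^2))
  · refine Filter.Eventually.of_forall fun z => ?_
    apply Measurable.aestronglyMeasurable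
    fun_prop
  · filter_upwards [Ioo_mem_nhds hmz hzM] with z hzI
    filter_upwards [hsupp] with t ht
    have h1 : t^2 ≤ b^2 := sq_le_sq_of_Icc ht
    have hz1 : m < z := hzI.1
    have hz2 : z < M := hzI.2
    have hzpos : 0 < z := lt_trans hm0 hz1
    have hd : 0 < z^2 - t^2 := by nlinarith
    rw [Real.norm_eq_abs, abs_of_pos (by positivity)]
    apply div_le_div₀ hM0.le hz2.le hmb
    nlinarith
  · exact integrable_const _
  · filter_upwards [hsupp] with t ht
    have h1 : t^2 ≤ b^2 := sq_le_sq_of_Icc ht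
    have hd : 0 < z₀^2 - t^2 := by nlinarith
    have hcd : ContinuousAt (fun z : ℝ => z^2 - t^2) z₀ := by fun_prop
    exact continuousAt_id.div hcd (ne_of_gt hd)

lemma contB (hsupp : ∀ᵐ t ∂μ, t ∈ Icc (0:ℝ) b) (hb0 : 0 ≤ b) :
    ContinuousOn (fun z => ∫ t, (z^2 + t^2)/(z^2 - t^2)^2 ∂μ) (Ioi b) := by
  intro z₀ hz₀
  apply ContinuousAt.continuousWithinAt
  rw [mem_Ioi] at hz₀
  set m := (z₀ + b)/2 with hm
  set M := z₀ + 1 with hM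
  have hbm : b < m := by rw [hm]; linarith
  have hmz : m < z₀ := by rw [hm]; linarith
  have hzM : z₀ < M := by rw [hM]; linarith
  have hm0 : 0 < m := lt_of_le_of_lt hb0 hbm
  have hmb : 0 < m^2 - b^2 := by nlinarith
  have hM0 : 0 < M := by linarith
  apply continuousAt_of_dominated (bound := fun _ => (M^2 + b^2)/(m^2 - b^2)^2)
  · refine Filter.Eventually.of_forall fun z => ?_
    apply Measurable.aestronglyMeasurable
    fun_prop
  · filter_upwards [Ioo_mem_nhds hmz hzM] with z hzI
    filter_upwards [hsupp] with t ht
    have h1 : t^2 ≤ b^2 := sq_le_sq_of_Icc ht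
    have hz1 : m < z := hzI.1
    have hz2 : z < M := hzI.2
    have hzpos : 0 < z := lt_trans hm0 hz1
    have hd : 0 < z^2 - t^2 := by nlinarith
    rw [Real.norm_eq_abs, abs_of_pos (by positivity)]
    apply div_le_div₀ (by positivity) (by nlinarith) (by positivity)
    apply pow_le_pow_left₀ hmb.le
    nlinarith
  · exact integrable_const _
  · filter_upwards [hsupp] with t ht
    have h1 : t^2 ≤ b^2 := sq_le_sq_of_Icc ht
    have hd : 0 < z₀^2 - t^2 := by nlinarith
    have hnum : ContinuousAt (fun z : ℝ => z^2 + t^2) z₀ := by fun_prop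
    have hden : ContinuousAt (fun z : ℝ => (z^2 - t^2)^2) z₀ := by fun_prop
    exact hnum.div hden (by positivity)

lemma phiT_contOn (hsupp : ∀ᵐ t ∂μ, t ∈ Icc (0:ℝ) b) (hb0 : 0 ≤ b) (s : ℝ) :
    ContinuousOn (fun z => phiT μ z s) (Ioi b) := by
  simp only [phiT]
  apply ContinuousOn.add
  · exact continuousOn_const.mul (contA hsupp hb0)
  · exact continuousOn_const.div continuousOn_id
      (fun z hz => ne_of_gt (lt_of_le_of_lt hb0 hz))

lemma phiT'_contOn (hsupp : ∀ᵐ t ∂μ, t ∈ Icc (0:ℝ) b) (hb0 : 0 ≤ b) (s : ℝ) :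
    ContinuousOn (fun z => phiT' μ z s) (Ioi b) := by
  simp only [phiT']
  apply ContinuousOn.neg
  apply ContinuousOn.add
  · exact continuousOn_const.mul (contB hsupp hb0)
  · refine continuousOn_const.div (continuousOn_pow 2) ?_
    intro z hz
    have : 0 < z := lt_of_le_of_lt hb0 hz
    positivity

end MainD

theorem dtransform_ratio (μ : Measure ℝ) [IsProbabilityMeasure μ] (b : ℝ)
    (hlow : μ (Set.Iio 0) = 0) (hhigh : μ (Set.Ioi b) = 0)
    (hbsup : ∀ ε > 0, 0 < μ (Set.Ioc (b - ε) b))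
    (q : ℝ) (hq : q ∈ Set.Ioc (0 : ℝ) 1) :
    ContinuousOn (fun x => 2 * DT μ q x * phiT μ x 1 / DT' μ q x) (Set.Ioi b) ∧
    AntitoneOn (fun x => 2 * DT μ q x * phiT μ x 1 / DT' μ q x) (Set.Ioi b) ∧
    ∀ x ∈ Set.Ioi b, 2 * DT μ q x * phiT μ x 1 / DT' μ q x ∈ Set.Icc (-1 : ℝ) 0 := by
  obtain ⟨hq0, hq1⟩ := hq
  have hb0 : 0 ≤ b := by
    by_contra hneg
    push_neg at hneg
    have h1 : (univ : Set ℝ) ⊆ Iio 0 ∪ Ioi b := by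
      intro t _
      rcases lt_or_ge t 0 with h | h
      · exact Or.inl h
      · exact Or.inr (lt_of_lt_of_le hneg h)
    have h2 : μ univ = 0 := measure_mono_null h1 (measure_union_null hlow hhigh)
    simp [measure_univ] at h2
  have hsupp : ∀ᵐ t ∂μ, t ∈ Icc (0:ℝ) b := by
    rw [ae_iff]
    refine measure_mono_null (fun t ht => ?_) (measure_union_null hlow hhigh)
    simp only [mem_setOf_eq, mem_Icc, not_and_or, not_le] at ht
    rcases ht with h | h
    · exact Or.inl h
    · exact Or.inr h
  refine ⟨?_, ?_, ?_⟩
  · -- continuity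
    apply ContinuousOn.div
    · exact (continuousOn_const.mul ((phiT_contOn hsupp hb0 1).mul
        (phiT_contOn hsupp hb0 q))).mul (phiT_contOn hsupp hb0 1)
    · exact ((phiT'_contOn hsupp hb0 1).mul (phiT_contOn hsupp hb0 q)).add
        ((phiT_contOn hsupp hb0 1).mul (phiT'_contOn hsupp hb0 q))
    · exact fun z hz => ne_of_lt (DT'_neg hsupp hb0 hq0 hq1 hz)
  · -- antitone
    intro x hx y hy hxy
    rw [mem_Ioi] at hx hy
    show 2 * DT μ q y * phiT μ y 1 / DT' μ q y ≤ 2 * DT μ q x * phiT μ x 1 / DT' μ q x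
    rw [Phi_eq hsupp hb0 hq0 hq1 hx, Phi_eq hsupp hb0 hq0 hq1 hy]
    have hKy : 1 ≤ Kfun μ q y := K_ge_one hsupp hb0 hq0 hq1 hy
    have hKxy : Kfun μ q y ≤ Kfun μ q x := K_anti hsupp hb0 hq0 hq1 hx hxy
    have h := one_div_le_one_div_of_le (lt_of_lt_of_le one_pos hKy) hKxy
    linarith
  · -- values
    intro z hz
    rw [mem_Ioi] at hz
    show 2 * DT μ q z * phiT μ z 1 / DT' μ q z ∈ Set.Icc (-1 : ℝ) 0
    rw [Phi_eq hsupp hb0 hq0 hq1 hz]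
    have hK : 1 ≤ Kfun μ q z := K_ge_one hsupp hb0 hq0 hq1 hz
    have hK0 : 0 < Kfun μ q z := lt_of_lt_of_le one_pos hK
    constructor
    · have h : 1/Kfun μ q z ≤ 1 := by
        rw [div_le_one hK0]; exact hK
      linarith
    · have h : 0 ≤ 1/Kfun μ q z := by positivity
      linarith
end

section
/- Key inequality for the D-transform ratio: let μ be a probability measure on the real line with bounded support contained in [0, ∞), b = sup supp(μ), and q ∈ (0,1]. Then for every x > b, 2·D_μ(x)·φ_μ(x;1) ≤ −D_μ'(x). -/
/-!
Key inequality for the D-transform ratio.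
-/

open MeasureTheory Set

/-- Purely algebraic core of the key inequality. -/
lemma dtransform_keyalg (A B C K q v : ℝ) (hA : 0 ≤ A) (hv : 0 ≤ v)
    (hq0 : 0 < q) (hq1 : q ≤ 1) (hCS : A ^ 2 ≤ C) (hId : 2 * C = B + K)
    (hKB : K ≤ B) (hAv : A * v = K) :
    2 * (A * (q * A + (1 - q) * v)) * A ≤
      B * (q * A + (1 - q) * v) + A * (q * B + (1 - q) * v ^ 2) := by
  have hP : 0 ≤ q * A + (1 - q) * v :=
    add_nonneg (mul_nonneg hq0.le hA) (mul_nonneg (by linarith) hv)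
  have h4 : K * v = A * v * v := by rw [hAv]
  have h6 : (0:ℝ) ≤ B + K - 2 * A ^ 2 := by linarith
  nlinarith [mul_nonneg h6 hP, mul_nonneg (mul_nonneg hq0.le hA) (sub_nonneg.2 hKB), h4]

theorem dtransform_key_inequality (μ : Measure ℝ) [IsProbabilityMeasure μ] (b : ℝ)
    (hlow : μ (Set.Iio 0) = 0) (hhigh : μ (Set.Ioi b) = 0)
    (hbsup : ∀ ε > 0, 0 < μ (Set.Ioc (b - ε) b))
    (q : ℝ) (hq : q ∈ Set.Ioc (0 : ℝ) 1)
    (x : ℝ) (hx : b < x) :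
    2 * DT μ q x * phiT μ x 1 ≤ -DT' μ q x := by
  obtain ⟨hq0, hq1⟩ := hq
  have hb0 : 0 ≤ b := by
    by_contra h
    push_neg at h
    have h1 := hbsup 1 one_pos
    have hsub : Set.Ioc (b - 1) b ⊆ Set.Iio 0 := fun t ht => lt_of_le_of_lt ht.2 h
    have h2 : μ (Set.Ioc (b - 1) b) ≤ 0 := hlow ▸ measure_mono hsub
    exact absurd (le_antisymm h2 zero_le) (ne_of_gt h1)
  have hx0 : 0 < x := lt_of_le_of_lt hb0 hx
  have hxne : x ≠ 0 := ne_of_gt hx0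
  have hae : ∀ᵐ t ∂μ, 0 ≤ t ∧ t ≤ b := by
    have hsub : {t : ℝ | ¬(0 ≤ t ∧ t ≤ b)} ⊆ Set.Iio 0 ∪ Set.Ioi b := by
      intro t ht
      simp only [Set.mem_setOf_eq, not_and_or, not_le] at ht
      rcases ht with h | h
      · exact Or.inl h
      · exact Or.inr h
    have h0 : μ {t : ℝ | ¬(0 ≤ t ∧ t ≤ b)} = 0 := by
      refine le_antisymm ?_ zero_le
      calc μ {t : ℝ | ¬(0 ≤ t ∧ t ≤ b)} ≤ μ (Set.Iio 0 ∪ Set.Ioi b) := measure_mono hsub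
        _ ≤ μ (Set.Iio 0) + μ (Set.Ioi b) := measure_union_le _ _
        _ = 0 := by rw [hlow, hhigh, add_zero]
    exact h0
  have hc : 0 < x ^ 2 - b ^ 2 := by nlinarith
  have hden : ∀ t : ℝ, 0 ≤ t → t ≤ b → 0 < x ^ 2 - t ^ 2 := by
    intro t ht1 ht2; nlinarith
  have hdc : ∀ t : ℝ, 0 ≤ t → t ≤ b → x ^ 2 - b ^ 2 ≤ x ^ 2 - t ^ 2 := by
    intro t ht1 ht2; nlinarith
  -- integrability
  have md : Measurable fun t : ℝ => x ^ 2 - t ^ 2 :=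
    measurable_const.sub (measurable_id.pow_const 2)
  have hintf : Integrable (fun t : ℝ => x / (x ^ 2 - t ^ 2)) μ := by
    refine Integrable.mono' (integrable_const (x / (x ^ 2 - b ^ 2)))
      (Measurable.aestronglyMeasurable (measurable_const.div md)) ?_
    filter_upwards [hae] with t ht
    obtain ⟨ht1, ht2⟩ := ht
    rw [Real.norm_eq_abs, abs_of_nonneg (div_nonneg hx0.le (hden t ht1 ht2).le)]
    gcongr
  have hinth : Integrable (fun t : ℝ => x ^ 2 / (x ^ 2 - t ^ 2) ^ 2) μ := by
    refine Integrable.mono' (integrable_const (x ^ 2 / (x ^ 2 - b ^ 2) ^ 2))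
      (Measurable.aestronglyMeasurable (measurable_const.div (md.pow_const 2))) ?_
    filter_upwards [hae] with t ht
    obtain ⟨ht1, ht2⟩ := ht
    rw [Real.norm_eq_abs,
      abs_of_nonneg (div_nonneg (sq_nonneg x) (sq_nonneg _))]
    gcongr
  have hintg : Integrable (fun t : ℝ => (x ^ 2 + t ^ 2) / (x ^ 2 - t ^ 2) ^ 2) μ := by
    refine Integrable.mono' (integrable_const ((x ^ 2 + b ^ 2) / (x ^ 2 - b ^ 2) ^ 2))
      (Measurable.aestronglyMeasurable
        ((measurable_const.add (measurable_id.pow_const 2)).div (md.pow_const 2))) ?_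
    filter_upwards [hae] with t ht
    obtain ⟨ht1, ht2⟩ := ht
    rw [Real.norm_eq_abs,
      abs_of_nonneg (div_nonneg (by positivity) (sq_nonneg _))]
    gcongr
  have hintk : Integrable (fun t : ℝ => 1 / (x ^ 2 - t ^ 2)) μ := by
    refine Integrable.mono' (integrable_const (1 / (x ^ 2 - b ^ 2)))
      (Measurable.aestronglyMeasurable (measurable_const.div md)) ?_
    filter_upwards [hae] with t ht
    obtain ⟨ht1, ht2⟩ := ht
    rw [Real.norm_eq_abs, abs_of_nonneg (div_nonneg zero_le_one (hden t ht1 ht2).le)]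
    gcongr
  -- notation for the integrals
  simp only [DT, DT', phiT, phiT', one_mul, sub_self, zero_div, add_zero]
  set A := ∫ t, x / (x ^ 2 - t ^ 2) ∂μ with hAdef
  set B := ∫ t, (x ^ 2 + t ^ 2) / (x ^ 2 - t ^ 2) ^ 2 ∂μ with hBdef
  set C := ∫ t, x ^ 2 / (x ^ 2 - t ^ 2) ^ 2 ∂μ with hCdef
  set K := ∫ t, 1 / (x ^ 2 - t ^ 2) ∂μ with hKdef
  have hA : 0 ≤ A :=
    integral_nonneg_of_ae <| hae.mono fun t ht =>
      div_nonneg hx0.le (hden t ht.1 ht.2).le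
  -- Cauchy–Schwarz : A² ≤ C
  have hCS : A ^ 2 ≤ C := by
    have h1 : 0 ≤ ∫ t, (x / (x ^ 2 - t ^ 2) - A) ^ 2 ∂μ :=
      integral_nonneg fun t => sq_nonneg _
    have h2 : ∫ t, (x / (x ^ 2 - t ^ 2) - A) ^ 2 ∂μ = C - 2 * A * A + A ^ 2 := by
      have he : ∀ t : ℝ, (x / (x ^ 2 - t ^ 2) - A) ^ 2 =
          x ^ 2 / (x ^ 2 - t ^ 2) ^ 2 - 2 * A * (x / (x ^ 2 - t ^ 2)) + A ^ 2 := by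
        intro t
        rw [← div_pow]
        ring
      simp only [he]
      have hint1 : Integrable
          (fun t : ℝ => x ^ 2 / (x ^ 2 - t ^ 2) ^ 2 - 2 * A * (x / (x ^ 2 - t ^ 2))) μ :=
        hinth.sub (hintf.const_mul (2 * A))
      rw [integral_add hint1 (integrable_const (A ^ 2)),
        integral_sub hinth (hintf.const_mul (2 * A)), integral_const_mul, integral_const,
        probReal_univ, smul_eq_mul, one_mul]
    nlinarith [h2 ▸ h1]
  -- identity 2C = B + K
  have hId : 2 * C = B + K := by
    have he : ∀ᵐ t ∂μ, 2 * (x ^ 2 / (x ^ 2 - t ^ 2) ^ 2) =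
        (x ^ 2 + t ^ 2) / (x ^ 2 - t ^ 2) ^ 2 + 1 / (x ^ 2 - t ^ 2) := by
      filter_upwards [hae] with t ht
      have hd := hden t ht.1 ht.2
      field_simp
      ring
    calc 2 * C = ∫ t, 2 * (x ^ 2 / (x ^ 2 - t ^ 2) ^ 2) ∂μ := (integral_const_mul 2 _).symm
      _ = ∫ t, ((x ^ 2 + t ^ 2) / (x ^ 2 - t ^ 2) ^ 2 + 1 / (x ^ 2 - t ^ 2)) ∂μ :=
        integral_congr_ae he
      _ = B + K := integral_add hintg hintk
  -- K ≤ B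
  have hKB : K ≤ B := by
    refine integral_mono_ae hintk hintg ?_
    filter_upwards [hae] with t ht
    have hd := hden t ht.1 ht.2
    rw [div_le_div_iff₀ hd (pow_pos hd 2)]
    nlinarith
  -- A = x * K
  have hAK : A = x * K := by
    rw [hAdef, hKdef, ← integral_const_mul]
    congr 1
    funext t
    ring
  have hAv : A * x⁻¹ = K := by
    rw [hAK]
    field_simp
  have key := dtransform_keyalg A B C K q x⁻¹ hA (inv_nonneg.2 hx0.le) hq0 hq1 hCS hId hKB hAv
  have e1 : (1 - q) / x = (1 - q) * x⁻¹ := by ring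
  have e2 : (1 - q) / x ^ 2 = (1 - q) * (x⁻¹) ^ 2 := by
    rw [div_eq_mul_inv, inv_pow]
  rw [e1, e2]
  linarith [key]
end
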